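/- arXiv:2302.09768 — 8 statements merged into one kernel-verified Lean document; each statement's English description precedes it below -/
import Mathlib

section
/- Let 𝒟 be a symmetric 2-(v,k,λ) design with k > λ(λ−2), and let G be a flag-transitive group of automorphisms of 𝒟 that acts transitively but imprimitively on the point set (i.e. G preserves a partition of 𝒫 into d classes each of size c, with c > 1 and d > 1). Then v = λ²(λ+2) and k = λ(λ+1). -/
lemma dc {α β : Type*} (A : Finset α) (Bs : Finset β) (R : α → β → Prop)
    [∀ a b, Decidable (R a b)] :
    ∑ a ∈ A, (Bs.filter fun b => R a b).card = ∑ b ∈ Bs, (A.filter fun a => R a b).card := by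
  simp only [Finset.card_filter]
  exact Finset.sum_comm

lemma arith (e s t : ℕ) (he : 2 ≤ e) (hs : 1 ≤ s) (ht : 2 ≤ t)
    (hdvd : (t*(e-1)+s) ∣ e*t*(t-1))
    (hineq : e*s*s < t + 2*s) :
    t = s*(e*s+1) := by
  obtain ⟨a, rfl⟩ : ∃ a, e = a + 2 := ⟨e - 2, by omega⟩
  obtain ⟨b, rfl⟩ : ∃ b, t = b + 2 := ⟨t - 2, by omega⟩
  have hdvd' : ((b+2)*(a+1)+s) ∣ (a+2)*(b+2)*(b+1) := by simpa using hdvd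
  set N := (b+2)*(a+1)+s with hN
  have hNpos : 0 < N := by positivity
  have H2 : N ∣ (a+2)*s*(b+1) := by
    have key : (a+2)*(b+1)*N = (a+1)*((a+2)*(b+2)*(b+1)) + (a+2)*s*(b+1) := by
      rw [hN]; ring
    have h1 : N ∣ (a+2)*(b+1)*N := Dvd.dvd.mul_left dvd_rfl _
    rw [key] at h1
    exact (Nat.dvd_add_right (hdvd'.mul_left _)).mp h1
  have H3 : N ∣ (a+2)*s*(s+a+1) := by
    have key : (a+2)*s*N = (a+1)*((a+2)*s*(b+1)) + (a+2)*s*(s+a+1) := by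
      rw [hN]; ring
    have h1 : N ∣ (a+2)*s*N := Dvd.dvd.mul_left dvd_rfl _
    rw [key] at h1
    exact (Nat.dvd_add_right (H2.mul_left _)).mp h1
  by_cases hs1 : s = 1
  · subst hs1
    obtain ⟨q, hq⟩ := H2
    rcases q with _ | _ | q
    · exfalso; simp at hq
    · -- q = 1
      have h' : (a+2)*1*(b+1) = N * 1 := hq
      rw [hN] at h'
      have h1 : b ≤ a + 1 := by nlinarith [h']
      have h2 : a + 1 ≤ b := by nlinarith [h']
      have hb : b = a + 1 := le_antisymm h1 h2
      subst hb; ring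
    · exfalso
      rw [hN] at hq
      nlinarith [hq]
  · have hs2 : 2 ≤ s := by omega
    by_cases ha : a = 0
    · subst ha
      obtain ⟨q, hq⟩ := H3
      rcases q with _ | _ | q
      · exfalso; simp at hq; omega
      · have h' : (0+2)*s*(s+0+1) = N := by linarith [hq]
        rw [hN] at h'
        have h1 : b + 2 ≤ s*((0+2)*s+1) := by nlinarith [h']
        have h2 : s*((0+2)*s+1) ≤ b + 2 := by nlinarith [h']
        omega
      · exfalso
        rw [hN] at hq
        nlinarith [hq, hineq]
    · exfalso
      have ha1 : 1 ≤ a := by omega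
      by_cases hspec : a = 1 ∧ s = 2
      · obtain ⟨rfl, rfl⟩ := hspec
        -- N = 2b+6 divides 6(b+1) and 3N = 6b+18, so N ∣ 12
        have h12 : N ∣ 12 := by
          have h1 : N ∣ 3 * N := Dvd.dvd.mul_left dvd_rfl 3
          have h2 : N ∣ 3*2*(b+1) := H2
          have key : 3 * N = 3*2*(b+1) + 12 := by rw [hN]; ring
          rw [key] at h1
          exact (Nat.dvd_add_right h2).mp h1
        have := Nat.le_of_dvd (by norm_num) h12
        rw [hN] at this
        omega
      · have hbound := Nat.le_of_dvd (by positivity) H3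
        rw [hN] at hbound
        -- b + 2 ≥ (a+2)*s*s - 2*s + 1 from hineq
        rcases Nat.lt_or_ge a 2 with ha2 | ha2
        · -- a = 1, s ≥ 3
          have ha' : a = 1 := by omega
          subst ha'
          have hs3 : 3 ≤ s := by
            rcases Nat.lt_or_ge s 3 with h | h
            · exfalso; exact hspec ⟨rfl, by omega⟩
            · exact h
          have hbZ : ((b:ℤ)+2)*2+s ≤ (3:ℤ)*s*(s+2) := by exact_mod_cast hbound
          have hiZ : (3:ℤ)*s*s < (b:ℤ)+2+2*s := by exact_mod_cast hineq
          have hsZ : (3:ℤ) ≤ s := by exact_mod_cast hs3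
          nlinarith [hbZ, hiZ, mul_nonneg (sub_nonneg.mpr hsZ) (show (0:ℤ) ≤ 3*(s:ℤ) by linarith)]
        · have hbZ : ((b:ℤ)+2)*(a+1)+s ≤ ((a:ℤ)+2)*s*(s+a+1) := by exact_mod_cast hbound
          have hiZ : ((a:ℤ)+2)*s*s < (b:ℤ)+2+2*s := by exact_mod_cast hineq
          have hsZ : (2:ℤ) ≤ s := by exact_mod_cast hs2
          rcases Nat.lt_or_ge a 3 with ha3 | ha3
          · have ha' : a = 2 := by omega
            subst ha'
            nlinarith [hbZ, hiZ, mul_nonneg (sub_nonneg.mpr hsZ) (show (0:ℤ) ≤ 8*s-1 by linarith)]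
          · have haZ : (3:ℤ) ≤ a := by exact_mod_cast ha3
            have key1 : (0:ℤ) ≤ ((a:ℤ)*(a+2)*s)*(s-2) := by
              have : (0:ℤ) ≤ (a:ℤ)*(a+2)*s := by positivity
              exact mul_nonneg this (by linarith)
            nlinarith [hbZ, hiZ, key1, mul_nonneg (mul_nonneg (show (0:ℤ) ≤ (a-3) by linarith) (show (0:ℤ) ≤ (a+2) by linarith)) (show (0:ℤ) ≤ (s:ℤ) by linarith)]


set_option maxHeartbeats 1600000 in


/-- Let `𝒟 = (P, ℬ)` be a symmetric 2-`(v,k,λ)` design with `k > λ(λ-2)`, and let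
`G` be a flag-transitive group of automorphisms of `𝒟` acting transitively but
imprimitively on points, preserving a partition of `P` into `d` classes of size `c`
with `c > 1` and `d > 1`.  Then `v = λ²(λ+2)` and `k = λ(λ+1)`. -/
theorem stmt_1 {P : Type*} [Fintype P] [DecidableEq P]
    (v k lam : ℕ) (ℬ : Finset (Finset P))
    -- `𝒟` is a 2-(v,k,λ) design:
    (hv : Fintype.card P = v) (hk2 : 2 ≤ k) (hkv : k < v)
    (hbk : ∀ B ∈ ℬ, B.card = k)
    (hlam : ∀ x y : P, x ≠ y → (ℬ.filter fun B => x ∈ B ∧ y ∈ B).card = lam)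
    -- `𝒟` is symmetric:
    (hsym : ℬ.card = v)
    -- `k > λ(λ-2)`:
    (hklam : (k : ℤ) > lam * (lam - 2))
    -- `G` is a group of automorphisms of `𝒟`:
    (G : Subgroup (Equiv.Perm P))
    (hGB : ∀ g ∈ G, ∀ B ∈ ℬ, B.image ⇑g ∈ ℬ)
    -- `G` is flag-transitive:
    (hflag : ∀ B₁ ∈ ℬ, ∀ B₂ ∈ ℬ, ∀ x₁ ∈ B₁, ∀ x₂ ∈ B₂,
      ∃ g ∈ G, g x₁ = x₂ ∧ B₁.image ⇑g = B₂)
    -- `G` is point-transitive: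
    (htrans : ∀ x y : P, ∃ g ∈ G, g x = y)
    -- `G` preserves a nontrivial partition `𝒜` of `P` into `d` classes of size `c`:
    (c d : ℕ) (hc : 1 < c) (hd : 1 < d)
    (𝒜 : Finset (Finset P)) (h𝒜d : 𝒜.card = d)
    (h𝒜c : ∀ Δ ∈ 𝒜, Δ.card = c)
    (h𝒜part : ∀ x : P, ∃! Δ, Δ ∈ 𝒜 ∧ x ∈ Δ)
    (h𝒜G : ∀ g ∈ G, ∀ Δ ∈ 𝒜, Δ.image ⇑g ∈ 𝒜) :
    v = lam ^ 2 * (lam + 2) ∧ k = lam * (lam + 1) := by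
  classical
  have hv0 : 0 < v := by omega
  have hBne : ℬ.Nonempty := Finset.card_pos.mp (by omega)
  obtain ⟨B0, hB0⟩ := hBne
  have hB0k : B0.card = k := hbk B0 hB0
  obtain ⟨x0, hx0, y0, hy0, hxy0⟩ := Finset.one_lt_card.mp (by omega : 1 < B0.card)
  -- classes
  set cl : P → Finset P := fun x => (h𝒜part x).choose with hcldef
  have hclA : ∀ x : P, cl x ∈ 𝒜 := fun x => (h𝒜part x).choose_spec.1.1
  have hclm : ∀ x : P, x ∈ cl x := fun x => (h𝒜part x).choose_spec.1.2
  have hclu : ∀ (x : P) (Δ : Finset P), Δ ∈ 𝒜 → x ∈ Δ → Δ = cl x :=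
    fun x Δ h1 h2 => (h𝒜part x).choose_spec.2 Δ ⟨h1, h2⟩
  have hclc : ∀ x, (cl x).card = c := fun x => h𝒜c _ (hclA x)
  -- lam ≥ 1
  have hlam1 : 1 ≤ lam := by
    rw [← hlam x0 y0 (fun h => hxy0 h)]
    exact Finset.card_pos.mpr ⟨B0, Finset.mem_filter.mpr ⟨hB0, hx0, hy0⟩⟩
  -- replication number
  set r : P → ℕ := fun x => (ℬ.filter fun B => x ∈ B).card with hrdef
  have hrle : ∀ x y : P, r x ≤ r y := by
    intro x y
    obtain ⟨g, hg, hgxy⟩ := htrans x y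
    apply Finset.card_le_card_of_injOn (fun B => B.image ⇑g)
    · intro B hB
      rw [Finset.mem_coe, Finset.mem_filter] at hB ⊢
      exact ⟨hGB g hg B hB.1, hgxy ▸ Finset.mem_image_of_mem _ hB.2⟩
    · intro B1 _ B2 _ h12
      exact Finset.image_injective g.injective h12
  have hrconst : ∀ x y : P, r x = r y := fun x y => le_antisymm (hrle x y) (hrle y x)
  have hcardP : (Finset.univ : Finset P).card = v := by rw [Finset.card_univ, hv]
  have hrk : ∀ x : P, r x = k := by
    have hsum : ∑ x ∈ Finset.univ, r x = v * k := by
      have h1 := dc (Finset.univ : Finset P) ℬ (fun x B => x ∈ B)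
      have h2 : ∀ B ∈ ℬ, (Finset.univ.filter fun x => x ∈ B).card = k := by
        intro B hB
        rw [show (Finset.univ.filter fun x => x ∈ B) = B by ext x; simp]
        exact hbk B hB
      rw [hrdef]
      calc ∑ x ∈ Finset.univ, (ℬ.filter fun B => x ∈ B).card
          = ∑ B ∈ ℬ, (Finset.univ.filter fun x => x ∈ B).card := h1
        _ = ∑ _B ∈ ℬ, k := Finset.sum_congr rfl h2
        _ = v * k := by rw [Finset.sum_const, hsym, smul_eq_mul]
    intro x
    have hsum2 : ∑ y ∈ Finset.univ, r y = v * r x := by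
      calc ∑ y ∈ Finset.univ, r y = ∑ _y ∈ Finset.univ, r x :=
            Finset.sum_congr rfl (fun y _ => hrconst y x)
        _ = v * r x := by rw [Finset.sum_const, hcardP, smul_eq_mul]
    exact Nat.eq_of_mul_eq_mul_left hv0 (hsum2.symm.trans hsum)
  -- basic design equation: (v-1) * lam = k * (k-1)
  have hAcount : (v - 1) * lam = k * (k - 1) := by
    have h1 := dc (Finset.univ.erase x0) ℬ (fun y B => x0 ∈ B ∧ y ∈ B)
    have hL : ∑ y ∈ Finset.univ.erase x0, ((ℬ.filter fun B => x0 ∈ B ∧ y ∈ B)).card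
        = (v - 1) * lam := by
      rw [Finset.sum_congr rfl (fun y hy => hlam x0 y (Ne.symm (Finset.mem_erase.mp hy).1)),
        Finset.sum_const, Finset.card_erase_of_mem (Finset.mem_univ x0), hcardP, smul_eq_mul]
    have hR : ∑ B ∈ ℬ, ((Finset.univ.erase x0).filter fun y => x0 ∈ B ∧ y ∈ B).card
        = k * (k - 1) := by
      have h2 : ∀ B ∈ ℬ, ((Finset.univ.erase x0).filter fun y => x0 ∈ B ∧ y ∈ B).card
          = if x0 ∈ B then k - 1 else 0 := by
        intro B hB
        by_cases hxB : x0 ∈ B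
        · rw [if_pos hxB,
            show ((Finset.univ.erase x0).filter fun y => x0 ∈ B ∧ y ∈ B) = B.erase x0 by
              ext y; simp [Finset.mem_erase, hxB, and_comm]]
          rw [Finset.card_erase_of_mem hxB, hbk B hB]
        · rw [if_neg hxB,
            show ((Finset.univ.erase x0).filter fun y => x0 ∈ B ∧ y ∈ B) = ∅ by
              ext y; simp [hxB]]
          rfl
      rw [Finset.sum_congr rfl h2, ← Finset.sum_filter]
      rw [Finset.sum_const, smul_eq_mul]
      have hthis : (ℬ.filter fun B => x0 ∈ B).card = k := hrk x0
      rw [hthis]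
    rw [← hL, h1, hR]
  -- intersection number e
  set e := (B0 ∩ cl x0).card with hedef
  have heflag : ∀ B ∈ ℬ, ∀ x ∈ B, (B ∩ cl x).card = e := by
    intro B hB x hx
    obtain ⟨g, hg, hgx, hgB⟩ := hflag B hB B0 hB0 x hx x0 hx0
    have hclim : (cl x).image ⇑g = cl x0 := by
      apply hclu x0
      · exact h𝒜G g hg (cl x) (hclA x)
      · exact hgx ▸ Finset.mem_image_of_mem _ (hclm x)
    calc (B ∩ cl x).card = ((B ∩ cl x).image ⇑g).card :=
          (Finset.card_image_of_injective _ g.injective).symm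
      _ = (B.image ⇑g ∩ (cl x).image ⇑g).card := by
          rw [Finset.image_inter _ _ g.injective]
      _ = e := by rw [hgB, hclim]
  have he1 : 1 ≤ e :=
    Finset.card_pos.mpr ⟨x0, Finset.mem_inter.mpr ⟨hx0, hclm x0⟩⟩
  have heBD : ∀ B ∈ ℬ, ∀ Δ ∈ 𝒜, (B ∩ Δ).card = 0 ∨ (B ∩ Δ).card = e := by
    intro B hB Δ hΔ
    rcases Finset.eq_empty_or_nonempty (B ∩ Δ) with hBD | ⟨x, hxBD⟩
    · left; rw [hBD]; rfl
    · right
      obtain ⟨hxB, hxΔ⟩ := Finset.mem_inter.mp hxBD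
      rw [hclu x Δ hΔ hxΔ]
      exact heflag B hB x hxB
  -- partition into classes
  have hpart : ∀ S : Finset P, S.card = ∑ Δ ∈ 𝒜, (S ∩ Δ).card := by
    intro S
    rw [Finset.card_eq_sum_card_fiberwise (f := cl) (t := 𝒜) (fun x _ => hclA x)]
    refine Finset.sum_congr rfl fun Δ hΔ => ?_
    congr 1
    ext x
    simp only [Finset.mem_filter, Finset.mem_inter]
    constructor
    · rintro ⟨hxS, rfl⟩; exact ⟨hxS, hclm x⟩
    · rintro ⟨hxS, hxΔ⟩; exact ⟨hxS, (hclu x Δ hΔ hxΔ).symm⟩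
  have hek : e ∣ k := by
    rw [← hB0k, hpart B0]
    exact Finset.dvd_sum fun Δ hΔ => by
      rcases heBD B0 hB0 Δ hΔ with h | h <;> simp [h]
  have hvcd : v = d * c := by
    have h2 : ∀ Δ ∈ 𝒜, (Finset.univ ∩ Δ).card = c := fun Δ hΔ => by
      rw [Finset.univ_inter]; exact h𝒜c Δ hΔ
    rw [← hcardP, hpart Finset.univ, Finset.sum_congr rfl h2, Finset.sum_const, h𝒜d,
      smul_eq_mul]
  -- second count: (c-1) * lam = k * (e-1)
  have hBcount : (c - 1) * lam = k * (e - 1) := by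
    have h1 := dc ((cl x0).erase x0) ℬ (fun y B => x0 ∈ B ∧ y ∈ B)
    have hL : ∑ y ∈ (cl x0).erase x0, ((ℬ.filter fun B => x0 ∈ B ∧ y ∈ B)).card
        = (c - 1) * lam := by
      rw [Finset.sum_congr rfl (fun y hy => hlam x0 y (Ne.symm (Finset.mem_erase.mp hy).1)),
        Finset.sum_const, Finset.card_erase_of_mem (hclm x0), hclc x0, smul_eq_mul]
    have hR : ∑ B ∈ ℬ, (((cl x0).erase x0).filter fun y => x0 ∈ B ∧ y ∈ B).card
        = k * (e - 1) := by
      have h2 : ∀ B ∈ ℬ, (((cl x0).erase x0).filter fun y => x0 ∈ B ∧ y ∈ B).card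
          = if x0 ∈ B then e - 1 else 0 := by
        intro B hB
        by_cases hxB : x0 ∈ B
        · rw [if_pos hxB,
            show (((cl x0).erase x0).filter fun y => x0 ∈ B ∧ y ∈ B)
              = (B ∩ cl x0).erase x0 by
              ext y
              simp only [Finset.mem_filter, Finset.mem_erase, Finset.mem_inter]
              tauto]
          rw [Finset.card_erase_of_mem (Finset.mem_inter.mpr ⟨hxB, hclm x0⟩),
            heflag B hB x0 hxB]
        · rw [if_neg hxB,
            show (((cl x0).erase x0).filter fun y => x0 ∈ B ∧ y ∈ B) = ∅ by
              ext y; simp [hxB]]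
          rfl
      rw [Finset.sum_congr rfl h2, ← Finset.sum_filter, Finset.sum_const, smul_eq_mul]
      have hthis : (ℬ.filter fun B => x0 ∈ B).card = k := hrk x0
      rw [hthis]
    rw [← hL, h1, hR]
  -- third count: e ∣ c * lam
  obtain ⟨Δ', hΔ'A, hΔ'ne⟩ := Finset.exists_mem_ne (h𝒜d ▸ hd) (cl x0)
  have hx0Δ' : x0 ∉ Δ' := fun h => hΔ'ne (hclu x0 Δ' hΔ'A h)
  have hCcount : e ∣ c * lam := by
    have h1 := dc Δ' ℬ (fun y B => x0 ∈ B ∧ y ∈ B)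
    have hL : ∑ y ∈ Δ', ((ℬ.filter fun B => x0 ∈ B ∧ y ∈ B)).card = c * lam := by
      rw [Finset.sum_congr rfl (fun y hy => hlam x0 y (fun h => hx0Δ' (h ▸ hy))),
        Finset.sum_const, h𝒜c Δ' hΔ'A, smul_eq_mul]
    rw [← hL, h1]
    refine Finset.dvd_sum fun B hB => ?_
    by_cases hxB : x0 ∈ B
    · rw [show (Δ'.filter fun y => x0 ∈ B ∧ y ∈ B) = B ∩ Δ' by
        ext y; simp only [Finset.mem_filter, Finset.mem_inter]; tauto]
      rcases heBD B hB Δ' hΔ'A with h | h <;> simp [h]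
    · rw [show (Δ'.filter fun y => x0 ∈ B ∧ y ∈ B) = ∅ by ext y; simp [hxB]]
      exact dvd_zero e
  -- e divides lam, e ≥ 2
  have hc1 : 1 ≤ c := le_of_lt hc
  have hd1 : 1 ≤ d := le_of_lt hd
  have hel : e ∣ lam := by
    have h2 : c * lam = k * (e - 1) + lam := by
      calc c * lam = ((c - 1) + 1) * lam := by rw [Nat.sub_add_cancel hc1]
        _ = (c - 1) * lam + lam := by ring
        _ = k * (e - 1) + lam := by rw [hBcount]
    exact (Nat.dvd_add_right (hek.mul_right _)).mp (h2 ▸ hCcount)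
  have he2 : 2 ≤ e := by
    by_contra h
    have he1' : e = 1 := by omega
    rw [he1'] at hBcount
    simp only [Nat.sub_self, Nat.mul_zero] at hBcount
    rcases Nat.mul_eq_zero.mp hBcount with h' | h' <;> omega
  obtain ⟨s, hls⟩ := hel
  obtain ⟨t, hkt⟩ := hek
  have hs1' : 1 ≤ s := by
    rcases Nat.eq_zero_or_pos s with h | h
    · rw [h, Nat.mul_zero] at hls; omega
    · exact h
  have ht1 : 1 ≤ t := by
    rcases Nat.eq_zero_or_pos t with h | h
    · rw [h, Nat.mul_zero] at hkt; omega
    · exact h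
  set N := t * (e - 1) + s with hNdef
  have hNpos : 0 < N := by positivity
  -- integer relations
  have hv1 : 1 ≤ v := hv0
  have hk1 : 1 ≤ k := by omega
  have hZ1 : (lam : ℤ) * ((v : ℤ) - 1) = k * ((k : ℤ) - 1) := by
    have := hAcount
    zify [hv1, hk1] at this
    linarith [this]
  have hZ2 : ((c : ℤ) - 1) * lam = k * ((e : ℤ) - 1) := by
    have := hBcount
    zify [hc1, he1] at this
    linarith [this]
  have hvz : (v : ℤ) = c * d := by
    rw [hvcd]; push_cast; ring
  have hZ3 : (lam : ℤ) * c * ((d : ℤ) - 1) = k * ((k : ℤ) - e) := by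
    linear_combination hZ1 - hZ2 - (lam : ℤ) * hvz
  have hNz : ((N : ℤ)) = t * ((e : ℤ) - 1) + s := by
    rw [hNdef]; push_cast [Nat.cast_sub he1]; ring
  have hkz : (k : ℤ) = e * t := by exact_mod_cast hkt
  have hlz : (lam : ℤ) = e * s := by exact_mod_cast hls
  have hZ4 : (N : ℤ) * ((d : ℤ) - 1) = e * t * ((t : ℤ) - 1) := by
    have hecz : (0 : ℤ) < e := by exact_mod_cast (by omega : 0 < e)
    apply mul_left_cancel₀ (ne_of_gt hecz)
    calc (e : ℤ) * ((N : ℤ) * ((d : ℤ) - 1)) = (lam : ℤ) * c * ((d : ℤ) - 1) := by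
          have hlamc : (lam : ℤ) * c = e * N := by
            rw [hNz]
            linear_combination hZ2 + ((e:ℤ) - 1) * hkz + hlz
          linear_combination (-((d:ℤ) - 1)) * hlamc
      _ = k * ((k : ℤ) - e) := hZ3
      _ = (e : ℤ) * (e * t * ((t : ℤ) - 1)) := by rw [hkz]; ring
  have hNd2 : N * (d - 1) = e * t * (t - 1) := by
    have h1 : ((N * (d - 1) : ℕ) : ℤ) = ((e * t * (t - 1) : ℕ) : ℤ) := by
      push_cast [Nat.cast_sub hd1, Nat.cast_sub ht1]
      linear_combination hZ4
    exact_mod_cast h1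
  have hdvdN : N ∣ e * t * (t - 1) := ⟨d - 1, hNd2.symm⟩
  have ht2 : 2 ≤ t := by
    by_contra h
    have ht1' : t = 1 := by omega
    rw [ht1'] at hNd2
    simp only [Nat.sub_self, Nat.mul_zero] at hNd2
    rcases Nat.mul_eq_zero.mp hNd2 with h' | h' <;> omega
  have hineqN : e * s * s < t + 2 * s := by
    have h1 : (lam : ℤ) * lam < (k : ℤ) + 2 * lam := by
      linarith only [hklam, (by ring : (lam : ℤ) * ((lam : ℤ) - 2) = (lam : ℤ) * lam - 2 * lam)]
    have h2 : lam * lam < k + 2 * lam := by exact_mod_cast h1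
    have hN2 : e * s * (e * s) < e * t + 2 * (e * s) := by
      rw [← hls, ← hkt]; exact h2
    have hN3 : e * (e * s * s) < e * (t + 2 * s) := by
      calc e * (e * s * s) = e * s * (e * s) := by ring
        _ < e * t + 2 * (e * s) := hN2
        _ = e * (t + 2 * s) := by ring
    exact Nat.lt_of_mul_lt_mul_left hN3
  have htfinal : t = s * (e * s + 1) := arith e s t he2 hs1' ht2 hdvdN hineqN
  have hkconc : k = lam * (lam + 1) := by
    rw [hkt, hls, htfinal]; ring
  have hvconc : v = lam ^ 2 * (lam + 2) := by
    have hkz2 : (k : ℤ) = (lam : ℤ) * ((lam : ℤ) + 1) := by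
      rw [hkconc]; push_cast; ring
    have hlamz : (0 : ℤ) < lam := by exact_mod_cast hlam1
    have h1 : (lam : ℤ) * v = lam * ((lam : ℤ) ^ 2 * ((lam : ℤ) + 2)) := by
      linear_combination hZ1 + ((k : ℤ) + lam * (lam + 1) - 1) * hkz2
    have h2 : (v : ℤ) = (lam : ℤ) ^ 2 * ((lam : ℤ) + 2) :=
      mul_left_cancel₀ (ne_of_gt hlamz) h1
    exact_mod_cast h2
  exact ⟨hvconc, hkconc⟩
end

section
/- Let 𝒟 be a symmetric 2-(v,k,λ) design with k > λ(λ−2), and let G be a flag-transitive group of automorphisms of 𝒟 preserving a nontrivial partition of the point set into d imprimitivity classes each of size c (with c > 1, d > 1). Then there is a constant ℓ such that for every block B and every class Δ of the partition, |B ∩ Δ| = 0 or |B ∩ Δ| = ℓ; moreover (c, d, ℓ) = (λ², λ+2, λ) or (c, d, ℓ) = (λ+2, λ², 2). -/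
private lemma ineq_aux1 (a s : ℕ) (ha : 2 < a) (hs : 1 < s) :
    s*((a+1)*(s+a)) + 2*(a*s) < a*((a+1)*(s*s)) + a + s := by
  obtain ⟨u, rfl⟩ : ∃ u, a = u + 3 := ⟨a - 3, by omega⟩
  obtain ⟨w, rfl⟩ : ∃ w, s = w + 2 := ⟨s - 2, by omega⟩
  nlinarith [Nat.zero_le (u^2*w^2), Nat.zero_le (u^2*w), Nat.zero_le (u*w^2),
    Nat.zero_le (u*w), Nat.zero_le (u^2), Nat.zero_le (w^2), Nat.zero_le u, Nat.zero_le w]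

private lemma ineq_aux2 (s : ℕ) (hs : 2 < s) :
    s*((2+1)*(s+2)) + 2*(2*s) < 2*((2+1)*(s*s)) + 2 + s := by
  obtain ⟨w, rfl⟩ : ∃ w, s = w + 3 := ⟨s - 3, by omega⟩
  nlinarith [Nat.zero_le (w^2), Nat.zero_le w]

lemma arith_core (lam l k c d : ℕ) (hlam : 1 ≤ lam) (hc : 2 ≤ c) (hd : 2 ≤ d) (hk2 : 2 ≤ k)
    (h1 : k * l = k + lam * (c - 1))
    (h2 : k * (k - 1) = (c * d - 1) * lam)
    (h3 : l ∣ k) (h4 : l ∣ c * lam)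
    (hK : lam * lam < k + 2 * lam) :
    (c, d, l) = (lam ^ 2, lam + 2, lam) ∨ (c, d, l) = (lam + 2, lam ^ 2, 2) := by
  rcases c with _ | c
  · omega
  simp only [Nat.add_sub_cancel] at h1
  -- l ≥ 2
  have hl2 : 2 ≤ l := by
    rcases l with _ | _ | l
    · exfalso
      have h0 : 1 ≤ lam * c := Nat.one_le_iff_ne_zero.mpr
        (Nat.mul_ne_zero (by omega) (by omega))
      omega
    · exfalso
      have : lam * c = 0 := by omega
      rcases Nat.mul_eq_zero.mp this with h | h <;> omega
    · omega
  -- l ∣ lam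
  have hdl : l ∣ lam := by
    have h5 : l ∣ lam * c := by
      have e : lam * c = k * l - k := by omega
      rw [e]
      exact Nat.dvd_sub (Dvd.intro_left k rfl) h3
    have h6 : l ∣ lam * (c + 1) - lam * c := Nat.dvd_sub (by rwa [mul_comm] at h4) h5
    have e2 : lam * (c + 1) - lam * c = lam := by
      have : lam * (c + 1) = lam * c + lam := by ring
      omega
    rwa [e2] at h6
  obtain ⟨s, rfl⟩ := hdl
  obtain ⟨m, rfl⟩ := h3
  obtain ⟨a, rfl⟩ : ∃ a, l = a + 1 := ⟨l - 1, by omega⟩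
  have ha1 : 1 ≤ a := by omega
  have hs1 : 1 ≤ s := by
    rcases Nat.eq_zero_or_pos s with h | h
    · subst h; simp at hlam
    · exact h
  have hm1 : 1 ≤ m := by
    rcases Nat.eq_zero_or_pos m with h | h
    · subst h; simp at hk2
    · exact h
  have hl0 : 0 < a + 1 := by omega
  -- reduced equation (i):  m*(a+1) = m + s*c   (true class size = c + 1)
  have h1' : m * (a + 1) = m + s * c := by
    apply Nat.eq_of_mul_eq_mul_left hl0
    calc (a+1) * (m * (a+1)) = ((a+1) * m) * (a+1) := by ring
    _ = (a+1) * m + (a+1) * s * c := h1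
    _ = (a+1) * (m + s * c) := by ring
  have hA : s * c = m * a := by
    have : m * (a + 1) = m * a + m := by ring
    omega
  -- reduced equation (ii)
  have h2' : s * ((c + 1) * d) + m = (a + 1) * (m * m) + s := by
    apply Nat.eq_of_mul_eq_mul_left hl0
    have hcd1 : 1 ≤ (c + 1) * d := by
      have : 0 < (c + 1) * d := by positivity
      omega
    have hk1 : 1 ≤ (a + 1) * m := by
      have : 0 < (a + 1) * m := by positivity
      omega
    zify [hcd1, hk1] at h2 ⊢
    linear_combination -h2
  -- key divisibility : (c+1) ∣ (a+1)*(s+a)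
  have hC : (c + 1) ∣ (a + 1) * (s + a) := by
    have hAz : (m : ℤ) * (a + 1) = m + s * c := by exact_mod_cast h1'
    have hBz : (s : ℤ) * ((c + 1) * d) + m = (a + 1) * (m * m) + s := by exact_mod_cast h2'
    have hW : (s : ℤ) * ((a + 1) * (s + a)) =
        (s : ℤ) * ((c + 1) * ((a : ℤ)^2 * d - (a + 1) * s * (c + 1) + 2 * (a + 1) * s + a)) := by
      linear_combination ((a : ℤ) - a*m - s*c - a*s*c - a^2*m) * hAz - (a : ℤ)^2 * hBz
    have hs0 : (s : ℤ) ≠ 0 := by positivity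
    have hWc : ((a : ℤ) + 1) * (s + a) =
        (c + 1) * ((a : ℤ)^2 * d - (a + 1) * s * (c + 1) + 2 * (a + 1) * s + a) :=
      mul_left_cancel₀ hs0 hW
    have : ((c : ℤ) + 1) ∣ ((a : ℤ) + 1) * (s + a) := Dvd.intro _ hWc.symm
    have := Int.natCast_dvd_natCast.mp (by push_cast; exact_mod_cast this :
      ((c + 1 : ℕ) : ℤ) ∣ (((a + 1) * (s + a) : ℕ) : ℤ))
    exact this
  -- bound from k > lam*(lam-2)
  have hKr : (a + 1) * (s * s) < m + 2 * s := by
    apply Nat.lt_of_mul_lt_mul_left (a := a + 1)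
    calc (a+1) * ((a+1) * (s*s)) = ((a+1)*s) * ((a+1)*s) := by ring
    _ < (a+1)*m + 2*((a+1)*s) := hK
    _ = (a+1) * (m + 2*s) := by ring
  clear hK h1 h2 h4 hlam hk2
  -- case split on a (that is, on l = a+1)
  rcases LE.le.eq_or_lt' ha1 with ha | ha2
  · -- a = 1, l = 2
    obtain rfl : a = 1 := ha
    have hm : m = s * c := by omega
    rcases LE.le.eq_or_lt' hs1 with hs | hs2
    · -- s = 1, lam = 2
      obtain rfl : s = 1 := hs
      have hc4 : c + 1 ≤ 4 := Nat.le_of_dvd (by norm_num) hC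
      have hc3 : c ≤ 3 := by omega
      have hc1 : 1 ≤ c := by omega
      interval_cases c
      · -- c+1 = 2
        exfalso
        have hm' : m = 1 := by simpa using hm
        subst hm'
        simp only [Nat.mul_one, Nat.one_mul] at h2'
        omega
      · -- c+1 = 3 : 3 ∤ 4
        exfalso
        omega
      · -- c+1 = 4
        left
        have hm3 : m = 3 := by omega
        subst hm3
        have hd4 : d = 4 := by omega
        subst hd4
        norm_num
    · -- s ≥ 2, conclude (c+1, d, 2) = (lam + 2, lam^2, 2) with lam = 2s
      right
      have hcge : 2 * s ≤ c + 1 := by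
        have h := hKr
        have h2s : s * (2 * s) < s * (c + 2) := by
          calc s * (2 * s) = 2 * (s * s) := by ring
          _ < m + 2 * s := hKr
          _ = s * c + 2 * s := by rw [hm]
          _ = s * (c + 2) := by ring
        have := Nat.lt_of_mul_lt_mul_left h2s
        omega
      obtain ⟨t, ht⟩ := hC
      have hceq : c + 1 = 2 * s + 2 := by
        have h24 : (1 + 1) * (s + 1) = 2 * s + 2 := by ring
        rw [h24] at ht
        rcases t with _ | _ | t
        · omega
        · omega
        · exfalso
          nlinarith [ht]
      have hmeq : m = s * (2 * s + 1) := by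
        have : c = 2 * s + 1 := by omega
        rw [this] at hm; exact hm
      have hdeq : d = 4 * (s * s) := by
        apply Nat.eq_of_mul_eq_mul_left (show 0 < s * (c + 1) by positivity)
        have hz : (s : ℤ) * ((c+1) * d) + m = (1 + 1 : ℤ) * (m * m) + s := by exact_mod_cast h2'
        zify
        rw [show ((c : ℤ) + 1) = 2 * s + 2 by exact_mod_cast congrArg (Nat.cast : ℕ → ℤ) hceq] at hz ⊢
        rw [show (m : ℤ) = s * (2 * s + 1) by exact_mod_cast congrArg (Nat.cast : ℕ → ℤ) hmeq] at hz
        linear_combination hz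
      simp only [Prod.mk.injEq]
      refine ⟨by omega, by rw [hdeq]; ring, by trivial⟩
  · -- a ≥ 2
    rcases LE.le.eq_or_lt' hs1 with hs | hs2
    · -- s = 1 : conclude (c+1, d, a+1) = (lam^2, lam+2, lam), lam = a+1
      left
      obtain rfl : s = 1 := hs
      have hc' : c = m * a := by omega
      have hma : a ≤ m := by
        have : (a + 1) * (1 * 1) = a + 1 := by ring
        omega
      obtain ⟨t, ht⟩ := hC
      have hceq : c + 1 = (a + 1) * (a + 1) := by
        rcases t with _ | _ | t
        · exfalso
          rw [Nat.mul_zero] at ht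
          nlinarith [ht]
        · rw [Nat.mul_one] at ht
          have e : (a + 1) * (1 + a) = (a + 1) * (a + 1) := by ring
          omega
        · exfalso
          have hub : 2 * (c + 1) ≤ (a + 1) * (1 + a) := by
            calc 2 * (c + 1) ≤ (t + 2) * (c + 1) := by nlinarith
            _ = (a + 1) * (1 + a) := by rw [ht]; ring
          nlinarith [hub, hc', hma]
      -- now m = a + 2, d = a + 3
      have hmeq : m = a + 2 := by
        have h' : m * a = (a + 2) * a := by nlinarith [hceq, hc']
        exact Nat.eq_of_mul_eq_mul_right (by omega) h'
      have hdeq : d = a + 3 := by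
        apply Nat.eq_of_mul_eq_mul_left (show 0 < (a+1)*(a+1) by positivity)
        have hz : (1 : ℤ) * ((c+1) * d) + m = ((a : ℤ) + 1) * (m * m) + 1 := by exact_mod_cast h2'
        zify
        rw [show ((c : ℤ) + 1) = ((a : ℤ)+1)*((a : ℤ)+1) by exact_mod_cast congrArg (Nat.cast : ℕ → ℤ) hceq] at hz
        rw [show (m : ℤ) = (a : ℤ) + 2 by exact_mod_cast congrArg (Nat.cast : ℕ → ℤ) hmeq] at hz
        linear_combination hz
      simp only [Prod.mk.injEq]
      refine ⟨by rw [hceq]; ring, by rw [hdeq]; ring, by ring⟩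
    · -- a ≥ 2 and s ≥ 2 : only (a,s) = (2,2) survives the bounds, and it is killed by h2'
      exfalso
      have hcub : c + 1 ≤ (a + 1) * (s + a) := Nat.le_of_dvd (by positivity) hC
      have hmlb : (a + 1) * (s * s) + 1 ≤ m + 2 * s := hKr
      have f2 : s * (c + 1) ≤ s * ((a+1)*(s+a)) := Nat.mul_le_mul_left s hcub
      have f1 : a * ((a+1)*(s*s)+1) ≤ a * (m + 2*s) := Nat.mul_le_mul_left a hmlb
      have key : a*((a+1)*(s*s)) + a + s ≤ s*((a+1)*(s+a)) + 2*(a*s) := by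
        have e1 : a * ((a+1)*(s*s)+1) = a*((a+1)*(s*s)) + a := by ring
        have e2 : a * (m + 2*s) = m*a + 2*(a*s) := by ring
        have e3 : s * (c + 1) = s*c + s := by ring
        rw [e1, e2] at f1
        rw [e3] at f2
        omega
      have ha3 : a ≤ 2 := by
        by_contra hgt
        push_neg at hgt
        exact Nat.lt_irrefl _ (Nat.lt_of_le_of_lt key (ineq_aux1 a s hgt hs2))
      obtain rfl : a = 2 := by omega
      have hs3 : s ≤ 2 := by
        by_contra hgt
        push_neg at hgt
        exact Nat.lt_irrefl _ (Nat.lt_of_le_of_lt key (ineq_aux2 s hgt))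
      obtain rfl : s = 2 := by omega
      -- now a = 2, s = 2 : c + 1 ≤ 12, m ≥ 9, 2c = 2m, c+1 ∣ 12 so c+1 = 12, m = 11
      have hm9 : 9 ≤ m := by omega
      have hceq : c = m := by omega
      subst hceq
      have hc12 : c + 1 = 12 := by
        obtain ⟨t, ht⟩ := hC
        have h12 : (2 + 1) * (2 + 2) = 12 := by norm_num
        rw [h12] at ht
        rcases Nat.lt_or_ge t 2 with h | h
        · interval_cases t <;> omega
        · exfalso
          have hge : 2*(c+1) ≤ (c+1)*t := by
            calc 2*(c+1) = (c+1)*2 := by ring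
            _ ≤ (c+1)*t := Nat.mul_le_mul_left _ h
          omega
      -- h2' : 2 * ((c+1)*d) + c = 3*(c*c) + 2 with c = 11 : 24d + 11 = 365, impossible
      rw [hc12] at h2'
      have hc11 : c = 11 := by omega
      subst hc11
      norm_num at h2'
      omega
lemma dcount {α β : Type*} (s : Finset α) (t : Finset β)
    (p : α → β → Prop) [∀ a b, Decidable (p a b)] :
    ∑ a ∈ s, (t.filter (fun b => p a b)).card = ∑ b ∈ t, (s.filter (fun a => p a b)).card := by
  simp only [Finset.card_filter]
  exact Finset.sum_comm

/-- Let `𝒟 = (P, ℬ)` be a symmetric 2-`(v,k,λ)` design with `k > λ(λ-2)`, and let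
`G` be a flag-transitive group of automorphisms of `𝒟` acting transitively but
imprimitively on points, preserving a partition `𝒜` of `P` into `d` classes of size
`c` with `c > 1` and `d > 1`.  Then there is a constant `ℓ` such that every block
meets every class in `0` or `ℓ` points, and `(c,d,ℓ) = (λ², λ+2, λ)` or
`(λ+2, λ², 2)`. -/
theorem stmt_2 {P : Type*} [Fintype P] [DecidableEq P]
    (v k lam : ℕ) (ℬ : Finset (Finset P))
    -- `𝒟` is a 2-(v,k,λ) design:
    (hv : Fintype.card P = v) (hk2 : 2 ≤ k) (hkv : k < v)
    (hbk : ∀ B ∈ ℬ, B.card = k)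
    (hlam : ∀ x y : P, x ≠ y → (ℬ.filter fun B => x ∈ B ∧ y ∈ B).card = lam)
    -- `𝒟` is symmetric:
    (hsym : ℬ.card = v)
    -- `k > λ(λ-2)`:
    (hklam : (k : ℤ) > lam * (lam - 2))
    -- `G` is a group of automorphisms of `𝒟`:
    (G : Subgroup (Equiv.Perm P))
    (hGB : ∀ g ∈ G, ∀ B ∈ ℬ, B.image ⇑g ∈ ℬ)
    -- `G` is flag-transitive:
    (hflag : ∀ B₁ ∈ ℬ, ∀ B₂ ∈ ℬ, ∀ x₁ ∈ B₁, ∀ x₂ ∈ B₂,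
      ∃ g ∈ G, g x₁ = x₂ ∧ B₁.image ⇑g = B₂)
    -- `G` is point-transitive:
    (htrans : ∀ x y : P, ∃ g ∈ G, g x = y)
    -- `G` preserves a nontrivial partition `𝒜` of `P` into `d` classes of size `c`:
    (c d : ℕ) (hc : 1 < c) (hd : 1 < d)
    (𝒜 : Finset (Finset P)) (h𝒜d : 𝒜.card = d)
    (h𝒜c : ∀ Δ ∈ 𝒜, Δ.card = c)
    (h𝒜part : ∀ x : P, ∃! Δ, Δ ∈ 𝒜 ∧ x ∈ Δ)
    (h𝒜G : ∀ g ∈ G, ∀ Δ ∈ 𝒜, Δ.image ⇑g ∈ 𝒜) :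
    ∃ ℓ : ℕ, (∀ B ∈ ℬ, ∀ Δ ∈ 𝒜, (B ∩ Δ).card = 0 ∨ (B ∩ Δ).card = ℓ) ∧
      ((c, d, ℓ) = (lam ^ 2, lam + 2, lam) ∨ (c, d, ℓ) = (lam + 2, lam ^ 2, 2)) := by
    classical
  have hv3 : 3 ≤ v := by omega
  have hBne : ℬ.Nonempty := by rw [← Finset.card_pos, hsym]; omega
  obtain ⟨B₀, hB₀⟩ := hBne
  have hBk := hbk B₀ hB₀
  obtain ⟨x₀, hx₀⟩ : B₀.Nonempty := by rw [← Finset.card_pos, hBk]; omega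
  -- the class map
  have hex : ∀ x : P, ∃ Δ, Δ ∈ 𝒜 ∧ x ∈ Δ ∧ ∀ Δ', Δ' ∈ 𝒜 → x ∈ Δ' → Δ' = Δ := by
    intro x
    obtain ⟨Δ, h1, h2⟩ := h𝒜part x
    exact ⟨Δ, h1.1, h1.2, fun Δ' hΔ' hx => h2 Δ' ⟨hΔ', hx⟩⟩
  choose cl clA clmem cluniq using hex
  have hmemiff : ∀ (x : P) (Δ : Finset P), Δ ∈ 𝒜 → (x ∈ Δ ↔ cl x = Δ) := by
    intro x Δ hΔ
    constructor
    · intro h; exact (cluniq x Δ hΔ h).symm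
    · intro h; rw [← h]; exact clmem x
  -- v = c * d
  have hvcd : v = c * d := by
    have h1 : (Finset.univ : Finset P).card
        = ∑ Δ ∈ 𝒜, (Finset.univ.filter (fun x => cl x = Δ)).card :=
      Finset.card_eq_sum_card_fiberwise (fun x _ => clA x)
    have h2 : ∀ Δ ∈ 𝒜, (Finset.univ.filter (fun x => cl x = Δ)).card = c := by
      intro Δ hΔ
      rw [show Finset.univ.filter (fun x => cl x = Δ) = Δ by
        ext x
        simp only [Finset.mem_filter, Finset.mem_univ, true_and]
        exact (hmemiff x Δ hΔ).symm]
      exact h𝒜c Δ hΔ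
    rw [Finset.sum_congr rfl h2, Finset.sum_const, h𝒜d, smul_eq_mul,
      Finset.card_univ, hv] at h1
    rw [h1]
    exact Nat.mul_comm d c
  -- replication number
  set r : P → ℕ := fun x => (ℬ.filter (fun B => x ∈ B)).card with hrdef
  have hrcount : ∀ x : P, r x * (k - 1) = (v - 1) * lam := by
    intro x
    have hdc := dcount (ℬ.filter (fun B => x ∈ B)) (Finset.univ.erase x) (fun B y => y ∈ B)
    have hterm : ∀ B ∈ ℬ.filter (fun B => x ∈ B),
        ((Finset.univ.erase x).filter (fun y => y ∈ B)).card = k - 1 := by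
      intro B hB
      obtain ⟨hBℬ, hxB⟩ := Finset.mem_filter.mp hB
      rw [show (Finset.univ.erase x).filter (fun y => y ∈ B) = B.erase x by
        ext y
        simp only [Finset.mem_filter, Finset.mem_erase, Finset.mem_univ, true_and, and_true]]
      rw [Finset.card_erase_of_mem hxB, hbk B hBℬ]
    have hL : ∑ B ∈ ℬ.filter (fun B => x ∈ B),
        ((Finset.univ.erase x).filter (fun y => y ∈ B)).card = r x * (k - 1) := by
      rw [Finset.sum_congr rfl hterm, Finset.sum_const, smul_eq_mul]
    have hterm2 : ∀ y ∈ Finset.univ.erase x,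
        ((ℬ.filter (fun B => x ∈ B)).filter (fun B => y ∈ B)).card = lam := by
      intro y hy
      rw [Finset.filter_filter]
      exact hlam x y (Ne.symm (Finset.mem_erase.mp hy).1)
    have hR : ∑ y ∈ Finset.univ.erase x,
        ((ℬ.filter (fun B => x ∈ B)).filter (fun B => y ∈ B)).card = (v - 1) * lam := by
      rw [Finset.sum_congr rfl hterm2, Finset.sum_const, smul_eq_mul,
        Finset.card_erase_of_mem (Finset.mem_univ x), Finset.card_univ, hv]
    rw [hL, hR] at hdc
    exact hdc
  have hrsum : ∑ x : P, r x = v * k := by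
    have hdc := dcount (Finset.univ : Finset P) ℬ (fun x B => x ∈ B)
    have hterm : ∀ B ∈ ℬ, (Finset.univ.filter (fun x => x ∈ B)).card = k := by
      intro B hB
      rw [show Finset.univ.filter (fun x => x ∈ B) = B by ext y; simp]
      exact hbk B hB
    have hR : ∑ B ∈ ℬ, (Finset.univ.filter (fun x => x ∈ B)).card = v * k := by
      rw [Finset.sum_congr rfl hterm, Finset.sum_const, smul_eq_mul, hsym]
    rw [hR] at hdc
    exact hdc
  have hrk : ∀ x, r x = k := by
    have hconst : ∀ x, r x = r x₀ := fun x =>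
      Nat.eq_of_mul_eq_mul_right (by omega) ((hrcount x).trans (hrcount x₀).symm)
    have hsum2 : v * r x₀ = v * k := by
      rw [← hrsum, Finset.sum_congr rfl (fun x _ => hconst x), Finset.sum_const,
        smul_eq_mul, Finset.card_univ, hv]
    intro x
    rw [hconst x]
    exact Nat.eq_of_mul_eq_mul_left (by omega) hsum2
  have hkk : k * (k - 1) = (v - 1) * lam := by
    have h := hrcount x₀
    rwa [hrk x₀] at h
  -- lam ≥ 1
  have hlam1 : 1 ≤ lam := by
    have h1 : 1 < B₀.card := by omega
    obtain ⟨y, hy, hyx⟩ := Finset.exists_mem_ne h1 x₀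
    have hcard := hlam x₀ y (Ne.symm hyx)
    have hmem : B₀ ∈ ℬ.filter (fun B => x₀ ∈ B ∧ y ∈ B) :=
      Finset.mem_filter.mpr ⟨hB₀, hx₀, hy⟩
    have := Finset.card_pos.mpr ⟨B₀, hmem⟩
    omega
  -- the constant intersection number
  set l := (B₀ ∩ cl x₀).card with hldef
  have hlconst : ∀ B ∈ ℬ, ∀ Δ ∈ 𝒜, ∀ x, x ∈ B → x ∈ Δ → (B ∩ Δ).card = l := by
    intro B hB Δ hΔ x hxB hxΔ
    obtain ⟨g, hgG, hgx, hgB⟩ := hflag B₀ hB₀ B hB x₀ hx₀ x hxB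
    have hΔ' : (cl x₀).image ⇑g ∈ 𝒜 := h𝒜G g hgG (cl x₀) (clA x₀)
    have hxim : x ∈ (cl x₀).image ⇑g := Finset.mem_image.mpr ⟨x₀, clmem x₀, hgx⟩
    have hΔeq : (cl x₀).image ⇑g = Δ := by
      rw [cluniq x ((cl x₀).image ⇑g) hΔ' hxim, cluniq x Δ hΔ hxΔ]
    rw [← hgB, ← hΔeq, ← Finset.image_inter _ _ g.injective]
    exact Finset.card_image_of_injective _ g.injective
  have hfirst : ∀ B ∈ ℬ, ∀ Δ ∈ 𝒜, (B ∩ Δ).card = 0 ∨ (B ∩ Δ).card = l := by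
    intro B hB Δ hΔ
    rcases Finset.eq_empty_or_nonempty (B ∩ Δ) with h | ⟨x, hx⟩
    · left; rw [h]; rfl
    · right
      obtain ⟨hxB, hxΔ⟩ := Finset.mem_inter.mp hx
      exact hlconst B hB Δ hΔ x hxB hxΔ
  -- the fundamental count:  k * l = k + lam * (c - 1)
  have heq1 : k * l = k + lam * (c - 1) := by
    have hdc := dcount (ℬ.filter (fun B => x₀ ∈ B)) (cl x₀) (fun B y => y ∈ B)
    have hterm : ∀ B ∈ ℬ.filter (fun B => x₀ ∈ B),
        ((cl x₀).filter (fun y => y ∈ B)).card = l := by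
      intro B hB
      obtain ⟨hBℬ, hxB⟩ := Finset.mem_filter.mp hB
      rw [show (cl x₀).filter (fun y => y ∈ B) = B ∩ cl x₀ by
        ext y
        simp only [Finset.mem_filter, Finset.mem_inter]
        tauto]
      exact hlconst B hBℬ (cl x₀) (clA x₀) x₀ hxB (clmem x₀)
    have hL : ∑ B ∈ ℬ.filter (fun B => x₀ ∈ B),
        ((cl x₀).filter (fun y => y ∈ B)).card = k * l := by
      rw [Finset.sum_congr rfl hterm, Finset.sum_const, smul_eq_mul]
      exact congrArg (fun z => z * l) (hrk x₀)
    have hR : ∑ y ∈ cl x₀,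
        ((ℬ.filter (fun B => x₀ ∈ B)).filter (fun B => y ∈ B)).card = k + (c - 1) * lam := by
      rw [← Finset.add_sum_erase _ _ (clmem x₀)]
      congr 1
      · rw [show (ℬ.filter (fun B => x₀ ∈ B)).filter (fun B => x₀ ∈ B)
            = ℬ.filter (fun B => x₀ ∈ B) by
          rw [Finset.filter_filter]
          exact Finset.filter_congr (fun B _ => by tauto)]
        exact hrk x₀
      · have hterm2 : ∀ y ∈ (cl x₀).erase x₀,
            ((ℬ.filter (fun B => x₀ ∈ B)).filter (fun B => y ∈ B)).card = lam := by
          intro y hy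
          rw [Finset.filter_filter]
          exact hlam x₀ y (Ne.symm (Finset.mem_erase.mp hy).1)
        rw [Finset.sum_congr rfl hterm2, Finset.sum_const, smul_eq_mul,
          Finset.card_erase_of_mem (clmem x₀), h𝒜c (cl x₀) (clA x₀)]
    rw [hL, hR] at hdc
    rw [hdc, Nat.mul_comm]
  -- l divides k
  have hlk : l ∣ k := by
    have hfib : B₀.card = ∑ Δ ∈ 𝒜, (B₀.filter (fun x => cl x = Δ)).card :=
      Finset.card_eq_sum_card_fiberwise (fun x _ => clA x)
    rw [hBk] at hfib
    rw [hfib]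
    refine Finset.dvd_sum (fun Δ hΔ => ?_)
    rw [show B₀.filter (fun x => cl x = Δ) = B₀ ∩ Δ by
      ext x
      simp only [Finset.mem_filter, Finset.mem_inter]
      exact and_congr_right (fun _ => (hmemiff x Δ hΔ).symm)]
    rcases hfirst B₀ hB₀ Δ hΔ with h | h
    · rw [h]; exact dvd_zero l
    · rw [h]
  -- a class not containing x₀
  obtain ⟨Δ', hΔ'𝒜, hΔ'ne⟩ : ∃ Δ', Δ' ∈ 𝒜 ∧ Δ' ≠ cl x₀ := by
    have h2 : 1 < 𝒜.card := by omega
    obtain ⟨Δ', hΔ', hne⟩ := Finset.exists_mem_ne h2 (cl x₀)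
    exact ⟨Δ', hΔ', hne⟩
  have hx₀Δ' : x₀ ∉ Δ' := fun h => hΔ'ne (cluniq x₀ Δ' hΔ'𝒜 h)
  -- l divides c * lam
  have hlcl : l ∣ c * lam := by
    have hdc := dcount (ℬ.filter (fun B => x₀ ∈ B)) Δ' (fun B y => y ∈ B)
    have hterm2 : ∀ y ∈ Δ',
        ((ℬ.filter (fun B => x₀ ∈ B)).filter (fun B => y ∈ B)).card = lam := by
      intro y hy
      rw [Finset.filter_filter]
      exact hlam x₀ y (fun h => hx₀Δ' (h ▸ hy))
    have hR : ∑ y ∈ Δ',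
        ((ℬ.filter (fun B => x₀ ∈ B)).filter (fun B => y ∈ B)).card = c * lam := by
      rw [Finset.sum_congr rfl hterm2, Finset.sum_const, smul_eq_mul, h𝒜c Δ' hΔ'𝒜]
    rw [← hR, ← hdc]
    refine Finset.dvd_sum (fun B hB => ?_)
    obtain ⟨hBℬ, hxB⟩ := Finset.mem_filter.mp hB
    rw [show Δ'.filter (fun y => y ∈ B) = B ∩ Δ' by
      ext y
      simp only [Finset.mem_filter, Finset.mem_inter]
      tauto]
    rcases hfirst B hBℬ Δ' hΔ'𝒜 with h | h
    · rw [h]; exact dvd_zero l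
    · rw [h]
  -- the two remaining numerical hypotheses
  have heq2 : k * (k - 1) = (c * d - 1) * lam := by rw [← hvcd]; exact hkk
  have hK : lam * lam < k + 2 * lam := by
    zify
    nlinarith [hklam]
  exact ⟨l, hfirst, arith_core lam l k c d hlam1 hc hd hk2 heq1 heq2 hlk hlcl hK⟩
end

section
/- Let 𝒟 be a 2-(v,k,λ) design, let G be a flag-transitive group of automorphisms of 𝒟, let x be a point, and let Γ be an orbit of the point stabilizer G_x on 𝒫 \ {x} (a nontrivial suborbit of G). Then r divides λ·|Γ|, where r is the number of blocks through a point. -/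
/-- Let `𝒟 = (P, ℬ)` be a 2-`(v,k,λ)` design with `r` blocks through each point, let
`G` be a flag-transitive group of automorphisms of `𝒟`, let `x` be a point, and let
`Γ` be an orbit of the stabiliser `G_x` on `P \ {x}` (a nontrivial suborbit, namely
the orbit of a point `y ≠ x`).  Then `r` divides `λ·|Γ|`. -/
theorem stmt_3 {P : Type*} [Fintype P] [DecidableEq P]
    (v k lam r : ℕ) (ℬ : Finset (Finset P))
    -- `𝒟` is a 2-(v,k,λ) design:
    (hv : Fintype.card P = v) (hk2 : 2 ≤ k) (hkv : k < v)
    (hbk : ∀ B ∈ ℬ, B.card = k)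
    (hlam : ∀ x y : P, x ≠ y → (ℬ.filter fun B => x ∈ B ∧ y ∈ B).card = lam)
    -- `r` is the number of blocks through each point:
    (hr : ∀ x : P, (ℬ.filter fun B => x ∈ B).card = r)
    -- `G` is a group of automorphisms of `𝒟`:
    (G : Subgroup (Equiv.Perm P))
    (hGB : ∀ g ∈ G, ∀ B ∈ ℬ, B.image ⇑g ∈ ℬ)
    -- `G` is flag-transitive:
    (hflag : ∀ B₁ ∈ ℬ, ∀ B₂ ∈ ℬ, ∀ x₁ ∈ B₁, ∀ x₂ ∈ B₂,
      ∃ g ∈ G, g x₁ = x₂ ∧ B₁.image ⇑g = B₂)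
    -- `Γ` is the orbit of a point `y ≠ x` under the stabiliser `G_x`:
    (x y : P) (hyx : y ≠ x) (Γ : Finset P)
    (hΓ : ∀ z : P, z ∈ Γ ↔ ∃ g ∈ G, g x = x ∧ g y = z) :
    r ∣ lam * Γ.card := by
  classical
  set S := ℬ.filter (fun B => x ∈ B) with hS
  have hΓinv : ∀ g ∈ G, g x = x → Γ.image ⇑g = Γ := by
    intro g hg hgx
    apply Finset.eq_of_subset_of_card_le
    · intro z hz
      simp only [Finset.mem_image] at hz
      obtain ⟨w, hw, rfl⟩ := hz
      rw [hΓ] at hw ⊢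
      obtain ⟨h, hh, hhx, hhy⟩ := hw
      exact ⟨g * h, mul_mem hg hh, by simp [hhx, hgx], by simp [hhy]⟩
    · rw [Finset.card_image_of_injective _ g.injective]
  have hxΓ : x ∉ Γ := by
    intro hx
    rw [hΓ] at hx
    obtain ⟨g, hg, hgx, hgy⟩ := hx
    exact hyx (g.injective (hgy.trans hgx.symm))
  have hconst : ∀ B₁ ∈ S, ∀ B₂ ∈ S, (B₁ ∩ Γ).card = (B₂ ∩ Γ).card := by
    intro B₁ hB₁ B₂ hB₂
    rw [hS, Finset.mem_filter] at hB₁ hB₂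
    obtain ⟨g, hg, hgx, hgB⟩ := hflag B₁ hB₁.1 B₂ hB₂.1 x hB₁.2 x hB₂.2
    have h2 : B₂ ∩ Γ = (B₁ ∩ Γ).image ⇑g := by
      rw [Finset.image_inter _ _ g.injective, hgB, hΓinv g hg hgx]
    rw [h2, Finset.card_image_of_injective _ g.injective]
  have hsum : ∑ B ∈ S, (B ∩ Γ).card = lam * Γ.card := by
    have h1 : ∀ B : Finset P, (B ∩ Γ).card = ∑ z ∈ Γ, if z ∈ B then 1 else 0 := by
      intro B
      rw [← Finset.card_filter]
      congr 1
      ext z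
      simp [Finset.mem_inter, and_comm]
    simp_rw [h1]
    rw [Finset.sum_comm]
    have h2 : ∀ z ∈ Γ, (∑ B ∈ S, if z ∈ B then 1 else 0) = lam := by
      intro z hz
      rw [← Finset.card_filter, hS, Finset.filter_filter, hlam x z]
      intro h
      exact hxΓ (h ▸ hz)
    rw [Finset.sum_congr rfl h2, Finset.sum_const, smul_eq_mul, mul_comm]
  rcases S.eq_empty_or_nonempty with h | ⟨B₀, hB₀⟩
  · rw [← hsum, h, Finset.sum_empty]; exact dvd_zero r
  · have h3 : ∑ B ∈ S, (B ∩ Γ).card = S.card * (B₀ ∩ Γ).card := by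
      rw [Finset.sum_congr rfl (fun B hB => hconst B hB B₀ hB₀), Finset.sum_const, smul_eq_mul]
    have h4 : S.card = r := hr x
    rw [← hsum, h3, h4]
    exact Dvd.intro _ rfl
end

section
/- Let 𝒟 be a symmetric 2-(v,k,λ) design and let g be a non-identity automorphism of 𝒟. Then the number of points fixed by g is at most k + √(k−λ) (an inequality of real numbers). -/
open Finset

lemma swap_count {α β : Type*} [DecidableEq α] [DecidableEq β]
    (s : Finset α) (t : Finset β) (p : α → β → Prop) [∀ a b, Decidable (p a b)] :
    ∑ a ∈ s, (t.filter (fun b => p a b)).card = ∑ b ∈ t, (s.filter (fun a => p a b)).card := by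
  simp only [Finset.card_filter]
  exact Finset.sum_comm

section design
variable {P : Type*} [Fintype P] [DecidableEq P]
    (v k lam : ℕ) (ℬ : Finset (Finset P))

lemma rep_mul (hv : Fintype.card P = v)
    (hbk : ∀ B ∈ ℬ, B.card = k)
    (hlam : ∀ x y : P, x ≠ y → (ℬ.filter fun B => x ∈ B ∧ y ∈ B).card = lam)
    (x : P) :
    (ℬ.filter fun B => x ∈ B).card * (k - 1) = (v - 1) * lam := by
  have hswap := swap_count (ℬ.filter fun B => x ∈ B) (Finset.univ.erase x)
      (fun B y => y ∈ B)
  -- LHS of hswap: ∑ B, ((univ.erase x).filter (· ∈ B)).card = ∑ B, (k-1)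
  have hL : ∑ B ∈ ℬ.filter (fun B => x ∈ B), ((Finset.univ.erase x).filter (fun y => y ∈ B)).card
      = (ℬ.filter fun B => x ∈ B).card * (k - 1) := by
    rw [Finset.sum_congr rfl (fun B hB => ?_), Finset.sum_const, smul_eq_mul]
    have hB' := Finset.mem_filter.1 hB
    have : (Finset.univ.erase x).filter (fun y => y ∈ B) = B.erase x := by
      ext y; simp [Finset.mem_erase, and_comm]
    rw [this, Finset.card_erase_of_mem hB'.2, hbk B hB'.1]
  have hR : ∑ y ∈ Finset.univ.erase x, ((ℬ.filter fun B => x ∈ B).filter (fun B => y ∈ B)).card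
      = (v - 1) * lam := by
    rw [Finset.sum_congr rfl (fun y hy => ?_), Finset.sum_const, smul_eq_mul,
      Finset.card_erase_of_mem (Finset.mem_univ x), Finset.card_univ, hv]
    rw [Finset.filter_filter]
    exact hlam x y (Ne.symm (Finset.mem_erase.1 hy).1)
  rw [hL, hR] at hswap
  exact hswap

lemma rep_eq (hv : Fintype.card P = v) (hk2 : 2 ≤ k) (hkv : k < v)
    (hbk : ∀ B ∈ ℬ, B.card = k)
    (hlam : ∀ x y : P, x ≠ y → (ℬ.filter fun B => x ∈ B ∧ y ∈ B).card = lam)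
    (hsym : ℬ.card = v)
    (x : P) :
    (ℬ.filter fun B => x ∈ B).card = k := by
  have hvpos : 0 < v := lt_of_le_of_lt (Nat.zero_le k) hkv
  have htot : ∑ y : P, (ℬ.filter fun B => y ∈ B).card = v * k := by
    rw [swap_count Finset.univ ℬ (fun y B => y ∈ B)]
    rw [Finset.sum_congr rfl (fun B hB => ?_), Finset.sum_const, smul_eq_mul, hsym]
    rw [Finset.filter_univ_mem, hbk B hB]
  have hx := rep_mul v k lam ℬ hv hbk hlam x
  have hall : ∀ y : P, (ℬ.filter fun B => y ∈ B).card = (ℬ.filter fun B => x ∈ B).card := by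
    intro y
    have hy := rep_mul v k lam ℬ hv hbk hlam y
    have : 0 < k - 1 := by omega
    exact Nat.eq_of_mul_eq_mul_right this (hy.trans hx.symm)
  have : ∑ y : P, (ℬ.filter fun B => y ∈ B).card = v * (ℬ.filter fun B => x ∈ B).card := by
    rw [Finset.sum_congr rfl (fun y _ => hall y), Finset.sum_const, smul_eq_mul,
      Finset.card_univ, hv]
  exact Nat.eq_of_mul_eq_mul_left hvpos (this.symm.trans htot)

lemma lam_basic (hv : Fintype.card P = v) (hk2 : 2 ≤ k) (hkv : k < v)
    (hbk : ∀ B ∈ ℬ, B.card = k)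
    (hlam : ∀ x y : P, x ≠ y → (ℬ.filter fun B => x ∈ B ∧ y ∈ B).card = lam)
    (hsym : ℬ.card = v) :
    (v - 1) * lam = k * (k - 1) ∧ 1 ≤ lam ∧ lam < k := by
  have hvpos : 0 < v := lt_of_le_of_lt (Nat.zero_le k) hkv
  have hP : 0 < Fintype.card P := by omega
  obtain ⟨x⟩ := Fintype.card_pos_iff.1 hP
  have h1 := rep_mul v k lam ℬ hv hbk hlam x
  rw [rep_eq v k lam ℬ hv hk2 hkv hbk hlam hsym x] at h1
  have hl1 : 1 ≤ lam := by
    rcases Nat.eq_zero_or_pos lam with h | h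
    · exfalso
      rw [h, Nat.mul_zero] at h1
      have : 0 < k * (k-1) := Nat.mul_pos (by omega) (by omega)
      omega
    · exact h
  refine ⟨h1.symm, hl1, ?_⟩
  by_contra hcon
  push_neg at hcon
  have : k * (k-1) < (v-1) * lam := by
    calc k * (k - 1) ≤ lam * (k-1) := Nat.mul_le_mul_right _ hcon
      _ < lam * (v-1) := Nat.mul_lt_mul_of_le_of_lt (le_refl lam) (by omega) (by omega)
      _ = (v-1) * lam := Nat.mul_comm _ _
  omega

lemma dual_inter (hv : Fintype.card P = v) (hk2 : 2 ≤ k) (hkv : k < v)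
    (hbk : ∀ B ∈ ℬ, B.card = k)
    (hlam : ∀ x y : P, x ≠ y → (ℬ.filter fun B => x ∈ B ∧ y ∈ B).card = lam)
    (hsym : ℬ.card = v)
    {B C : Finset P} (hB : B ∈ ℬ) (hC : C ∈ ℬ) (hne : B ≠ C) :
    (B ∩ C).card = lam := by
  classical
  have hrep := rep_eq v k lam ℬ hv hk2 hkv hbk hlam hsym
  have hlb := lam_basic v k lam ℬ hv hk2 hkv hbk hlam hsym
  set E := ℬ.erase B with hE
  have hEcard : E.card = v - 1 := by rw [hE, Finset.card_erase_of_mem hB, hsym]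
  -- first moment
  have ha : ∑ D ∈ E, (B ∩ D).card = k * (k - 1) := by
    have : ∀ D ∈ E, (B ∩ D).card = (B.filter (fun x => x ∈ D)).card := by
      intro D _; rw [Finset.filter_mem_eq_inter]
    rw [Finset.sum_congr rfl this, swap_count E B (fun D x => x ∈ D)]
    rw [Finset.sum_congr rfl (fun x hx => ?_), Finset.sum_const, smul_eq_mul, hbk B hB]
    show (E.filter fun D => x ∈ D).card = k - 1
    rw [hE, Finset.filter_erase, Finset.card_erase_of_mem, hrep x]
    exact Finset.mem_filter.2 ⟨hB, hx⟩
  -- second moment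
  have hb : ∑ D ∈ E, (B ∩ D).card * (B ∩ D).card = k * (k - 1) * lam := by
    have step1 : ∀ D ∈ E, (B ∩ D).card * (B ∩ D).card
        = ((B ×ˢ B).filter (fun q : P × P => q.1 ∈ D ∧ q.2 ∈ D)).card := by
      intro D _
      rw [Finset.filter_product (fun x => x ∈ D) (fun x => x ∈ D), Finset.card_product,
        Finset.filter_mem_eq_inter]
    rw [Finset.sum_congr rfl step1, swap_count E (B ×ˢ B) (fun D q => q.1 ∈ D ∧ q.2 ∈ D)]
    have hdiag : ∀ x ∈ B, (E.filter fun D => x ∈ D ∧ x ∈ D).card = k - 1 := by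
      intro x hx
      simp only [and_self]
      rw [hE, Finset.filter_erase, Finset.card_erase_of_mem, hrep x]
      exact Finset.mem_filter.2 ⟨hB, hx⟩
    have hoff : ∀ x ∈ B, ∀ y ∈ B, x ≠ y →
        (E.filter fun D => x ∈ D ∧ y ∈ D).card = lam - 1 := by
      intro x hx y hy hxy
      rw [hE, Finset.filter_erase, Finset.card_erase_of_mem, hlam x y hxy]
      exact Finset.mem_filter.2 ⟨hB, hx, hy⟩
    rw [Finset.sum_product]
    have hrow : ∀ x ∈ B, ∑ y ∈ B, (E.filter fun D => x ∈ D ∧ y ∈ D).card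
        = (k - 1) + (k - 1) * (lam - 1) := by
      intro x hx
      rw [← Finset.add_sum_erase _ _ hx, hdiag x hx]
      congr 1
      rw [Finset.sum_congr rfl (fun y hy => hoff x hx y (Finset.mem_of_mem_erase hy)
          (Ne.symm (Finset.mem_erase.1 hy).1)), Finset.sum_const, smul_eq_mul,
        Finset.card_erase_of_mem hx, hbk B hB]
    rw [Finset.sum_congr rfl hrow, Finset.sum_const, smul_eq_mul, hbk B hB]
    obtain ⟨l, rfl⟩ : ∃ l, lam = l + 1 := ⟨lam - 1, by omega⟩
    simp only [Nat.add_sub_cancel]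
    ring
  -- variance argument
  have hCE : C ∈ E := Finset.mem_erase.2 ⟨Ne.symm hne, hC⟩
  have hN : ((E.card : ℤ)) = ((v-1 : ℕ) : ℤ) := by rw [hEcard]
  have ha' : ∑ D ∈ E, ((B ∩ D).card : ℤ) = ((v-1 : ℕ) : ℤ) * (lam : ℤ) := by
    rw [← Nat.cast_sum, ha, ← hlb.1, Nat.cast_mul]
  have hb' : ∑ D ∈ E, ((B ∩ D).card : ℤ) * ((B ∩ D).card : ℤ)
      = ((v-1 : ℕ) : ℤ) * (lam : ℤ) * (lam : ℤ) := by
    have h2 : k * (k-1) * lam = (v-1) * lam * lam := by rw [← hlb.1]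
    rw [Finset.sum_congr rfl (fun D _ => (Nat.cast_mul ((B ∩ D).card) ((B ∩ D).card)).symm),
      ← Nat.cast_sum, hb, h2, Nat.cast_mul, Nat.cast_mul]
  have key : ∑ D ∈ E, (((B ∩ D).card : ℤ) - (lam : ℤ))^2 = 0 := by
    have expand : ∀ D ∈ E, (((B ∩ D).card : ℤ) - (lam : ℤ))^2
        = ((B ∩ D).card : ℤ) * ((B ∩ D).card : ℤ)
          - 2 * (lam : ℤ) * ((B ∩ D).card : ℤ) + (lam : ℤ)^2 := by
      intro D _; ring
    rw [Finset.sum_congr rfl expand, Finset.sum_add_distrib, Finset.sum_sub_distrib,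
      Finset.sum_const, ← Finset.mul_sum, hb', ha', nsmul_eq_mul, hN]
    ring
  have hzero := (Finset.sum_eq_zero_iff_of_nonneg (fun D _ => sq_nonneg _)).1 key C hCE
  have : ((B ∩ C).card : ℤ) = (lam : ℤ) := by
    have := sq_eq_zero_iff.1 hzero
    omega
  exact_mod_cast this

end design

set_option maxHeartbeats 2000000 in
/-- Let `𝒟 = (P, ℬ)` be a symmetric 2-`(v,k,λ)` design and let `g` be a non-identity
automorphism of `𝒟`.  Then `g` fixes at most `k + √(k-λ)` points. -/
theorem stmt_4 {P : Type*} [Fintype P] [DecidableEq P]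
    (v k lam : ℕ) (ℬ : Finset (Finset P))
    -- `𝒟` is a 2-(v,k,λ) design:
    (hv : Fintype.card P = v) (hk2 : 2 ≤ k) (hkv : k < v)
    (hbk : ∀ B ∈ ℬ, B.card = k)
    (hlam : ∀ x y : P, x ≠ y → (ℬ.filter fun B => x ∈ B ∧ y ∈ B).card = lam)
    -- `𝒟` is symmetric:
    (hsym : ℬ.card = v)
    -- `g` is a non-identity automorphism of `𝒟`:
    (g : Equiv.Perm P) (hg : g ≠ 1)
    (hgB : ∀ B ∈ ℬ, B.image ⇑g ∈ ℬ) :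
    ((Finset.univ.filter fun x : P => g x = x).card : ℝ) ≤
      k + Real.sqrt ((k : ℝ) - lam) := by
  classical
  have hrep := rep_eq v k lam ℬ hv hk2 hkv hbk hlam hsym
  have hlb := lam_basic v k lam ℬ hv hk2 hkv hbk hlam hsym
  set F : Finset P := Finset.univ.filter (fun x : P => g x = x) with hF
  set f : ℕ := F.card with hf
  set 𝔉 : Finset (Finset P) := ℬ.filter (fun B => B.image ⇑g = B) with h𝔉
  set m : ℕ := 𝔉.card with hm
  set d : P → ℕ := fun q => (𝔉.filter (fun B => q ∈ B)).card with hd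
  have h𝔉sub : 𝔉 ⊆ ℬ := Finset.filter_subset _ _
  have hmv : m ≤ v := hsym ▸ Finset.card_le_card h𝔉sub
  -- a moved point exists
  obtain ⟨q0, hq0⟩ : ∃ q : P, g q ≠ q := by
    by_contra h
    push_neg at h
    exact hg (Equiv.ext h)
  have hfv : f < v := by
    rw [hf, ← hv, ← Finset.card_univ]
    apply Finset.card_lt_card
    rw [Finset.ssubset_univ_iff]
    intro h
    have := h ▸ Finset.mem_univ q0
    rw [hF, Finset.mem_filter] at this
    exact hq0 this.2
  -- key natural-number inequality
  have main : (f - k) * (f - k) ≤ k - lam := by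
    set I : ℕ := ∑ p ∈ F, d p with hI
    -- (1) total incidences of fixed points
    have hsum1 : ∑ B ∈ ℬ, (F.filter (fun p => p ∈ B)).card = f * k := by
      rw [← swap_count F ℬ (fun p B => p ∈ B)]
      rw [Finset.sum_congr rfl (fun p _ => hrep p), Finset.sum_const, smul_eq_mul]
    -- (2) I as a sum over fixed blocks
    have hI2 : I = ∑ B ∈ 𝔉, (F.filter (fun p => p ∈ B)).card :=
      swap_count F 𝔉 (fun p B => p ∈ B)
    -- (3) non-fixed blocks contain few fixed points
    have h3 : ∀ B ∈ ℬ, ¬ (B.image ⇑g = B) → (F.filter (fun p => p ∈ B)).card ≤ lam := by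
      intro B hB hBg
      have himg : B.image ⇑g ∈ ℬ := hgB B hB
      have hsub : F.filter (fun p => p ∈ B) ⊆ B ∩ B.image ⇑g := by
        intro p hp
        rw [Finset.mem_filter, hF, Finset.mem_filter] at hp
        refine Finset.mem_inter.2 ⟨hp.2, ?_⟩
        exact Finset.mem_image.2 ⟨p, hp.2, hp.1.2⟩
      calc (F.filter (fun p => p ∈ B)).card ≤ (B ∩ B.image ⇑g).card :=
            Finset.card_le_card hsub
        _ = lam := dual_inter v k lam ℬ hv hk2 hkv hbk hlam hsym hB himg
              (fun h => hBg h.symm)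
    -- (4) f*k ≤ I + (v-m)*lam
    have h4 : f * k ≤ I + (v - m) * lam := by
      have hsplit := Finset.sum_filter_add_sum_filter_not ℬ (fun B => B.image ⇑g = B)
        (fun B => (F.filter (fun p => p ∈ B)).card)
      have hcard𝔉 : (ℬ.filter (fun B => ¬ B.image ⇑g = B)).card = v - m := by
        have := Finset.card_filter_add_card_filter_not
          (s := ℬ) (p := fun B => B.image ⇑g = B)
        rw [hsym] at this
        rw [← h𝔉, ← hm] at this
        omega
      have hb2 : ∑ B ∈ ℬ.filter (fun B => ¬ B.image ⇑g = B),
          (F.filter (fun p => p ∈ B)).card ≤ (v - m) * lam := by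
        rw [← hcard𝔉]
        calc _ ≤ ∑ _B ∈ ℬ.filter (fun B => ¬ B.image ⇑g = B), lam :=
              Finset.sum_le_sum (fun B hB => h3 B (Finset.mem_filter.1 hB).1
                (Finset.mem_filter.1 hB).2)
          _ = _ := by rw [Finset.sum_const, smul_eq_mul]
      rw [← hsum1, ← hsplit, ← h𝔉, ← hI2]
      exact Nat.add_le_add_left hb2 I
    -- (5) total incidences of fixed blocks
    have h5 : ∑ q : P, d q = m * k := by
      rw [hd]
      rw [swap_count Finset.univ 𝔉 (fun q B => q ∈ B)]
      rw [Finset.sum_congr rfl (fun B hB => ?_), Finset.sum_const, smul_eq_mul]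
      rw [Finset.filter_univ_mem, hbk B (h𝔉sub hB)]
    -- (6) m*k ≤ I + (v-f)*lam
    have h6 : m * k ≤ I + (v - f) * lam := by
      have hsplit := Finset.sum_filter_add_sum_filter_not Finset.univ
        (fun x : P => g x = x) (fun q => d q)
      have hcardNF : (Finset.univ.filter (fun x : P => ¬ g x = x)).card = v - f := by
        have := Finset.card_filter_add_card_filter_not
          (s := (Finset.univ : Finset P)) (p := fun x : P => g x = x)
        rw [Finset.card_univ, hv] at this
        rw [← hF, ← hf] at this
        omega
      have hb2 : ∑ q ∈ Finset.univ.filter (fun x : P => ¬ g x = x), d q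
          ≤ (v - f) * lam := by
        rw [← hcardNF]
        calc _ ≤ ∑ _q ∈ Finset.univ.filter (fun x : P => ¬ g x = x), lam := by
              apply Finset.sum_le_sum
              intro q hq
              have hq' : ¬ g q = q := (Finset.mem_filter.1 hq).2
              have hsub : 𝔉.filter (fun B => q ∈ B)
                  ⊆ ℬ.filter (fun B => q ∈ B ∧ g q ∈ B) := by
                intro B hB
                rw [Finset.mem_filter] at hB ⊢
                obtain ⟨hB1, hB2⟩ := hB
                rw [h𝔉, Finset.mem_filter] at hB1
                refine ⟨hB1.1, hB2, ?_⟩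
                rw [← hB1.2]
                exact Finset.mem_image.2 ⟨q, hB2, rfl⟩
              calc d q ≤ (ℬ.filter (fun B => q ∈ B ∧ g q ∈ B)).card :=
                    Finset.card_le_card hsub
                _ = lam := hlam q (g q) (fun h => hq' h.symm)
          _ = _ := by rw [Finset.sum_const, smul_eq_mul]
      rw [← h5, ← hsplit, ← hF, ← hI]
      exact Nat.add_le_add_left hb2 I
    -- (7) second moment of d
    have h7 : ∑ q : P, d q * d q = m * (k + (m - 1) * lam) := by
      have step1 : ∀ q : P, d q * d q
          = ((𝔉 ×ˢ 𝔉).filter (fun BC : Finset P × Finset P => q ∈ BC.1 ∧ q ∈ BC.2)).card := by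
        intro q
        rw [Finset.filter_product (fun B => q ∈ B) (fun B => q ∈ B), Finset.card_product]
      rw [Finset.sum_congr rfl (fun q _ => step1 q),
        swap_count Finset.univ (𝔉 ×ˢ 𝔉)
          (fun q (BC : Finset P × Finset P) => q ∈ BC.1 ∧ q ∈ BC.2)]
      have step2 : ∀ BC : Finset P × Finset P, BC ∈ 𝔉 ×ˢ 𝔉 →
          (Finset.univ.filter (fun q => q ∈ BC.1 ∧ q ∈ BC.2)).card = (BC.1 ∩ BC.2).card := by
        intro BC _
        congr 1
        ext q
        simp [Finset.mem_inter]
      rw [Finset.sum_congr rfl step2, Finset.sum_product]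
      have hrow : ∀ B ∈ 𝔉, ∑ C ∈ 𝔉, (B ∩ C).card = k + (m - 1) * lam := by
        intro B hB
        rw [← Finset.add_sum_erase _ _ hB, Finset.inter_self, hbk B (h𝔉sub hB)]
        congr 1
        have : ∀ C ∈ 𝔉.erase B, (B ∩ C).card = lam := by
          intro C hC
          have hC' := Finset.mem_erase.1 hC
          exact dual_inter v k lam ℬ hv hk2 hkv hbk hlam hsym
            (h𝔉sub hB) (h𝔉sub hC'.2) (Ne.symm hC'.1)
        rw [Finset.sum_congr rfl this, Finset.sum_const, smul_eq_mul,
          Finset.card_erase_of_mem hB, hm]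
      rw [Finset.sum_congr rfl hrow, Finset.sum_const, smul_eq_mul, hm]
    -- trivial case
    by_cases hfk' : f ≤ k
    · rw [Nat.sub_eq_zero_of_le hfk']
      exact Nat.zero_le _
    push_neg at hfk'
    by_contra hcon
    push_neg at hcon
    -- split the sums over fixed / non-fixed points
    set NF : Finset P := Finset.univ.filter (fun x : P => ¬ g x = x) with hNF
    have hcardNF : NF.card = v - f := by
      have := Finset.card_filter_add_card_filter_not
        (s := (Finset.univ : Finset P)) (p := fun x : P => g x = x)
      rw [Finset.card_univ, hv] at this
      rw [← hF, ← hf] at this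
      rw [hNF]
      omega
    set J : ℕ := ∑ q ∈ NF, d q with hJdef
    have hsplitd : I + J = m * k := by
      rw [← h5, hI, hJdef, hF, hNF]
      exact Finset.sum_filter_add_sum_filter_not Finset.univ _ _
    have hsplitsq : (∑ p ∈ F, d p * d p) + (∑ q ∈ NF, d q * d q)
        = m * (k + (m - 1) * lam) := by
      rw [← h7, hF, hNF]
      exact Finset.sum_filter_add_sum_filter_not Finset.univ _ _
    -- Cauchy–Schwarz over fixed and non-fixed points
    have cs1 : ((I : ℤ))^2 ≤ (f : ℤ) * ∑ p ∈ F, ((d p : ℤ))^2 := by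
      have h := sq_sum_le_card_mul_sum_sq (s := F) (f := fun p => ((d p : ℤ)))
      rw [← Nat.cast_sum] at h
      exact_mod_cast h
    have cs2 : ((J : ℤ))^2 ≤ ((v - f : ℕ) : ℤ) * ∑ q ∈ NF, ((d q : ℤ))^2 := by
      have h := sq_sum_le_card_mul_sum_sq (s := NF) (f := fun q => ((d q : ℤ)))
      rw [← Nat.cast_sum, hcardNF] at h
      exact_mod_cast h
    have hVFc : ((v - f : ℕ) : ℤ) = (v:ℤ) - (f:ℤ) := by
      rw [Nat.cast_sub (le_of_lt hfv)]
    have hVMc : ((v - m : ℕ) : ℤ) = (v:ℤ) - (m:ℤ) := by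
      rw [Nat.cast_sub hmv]
    have hSAB : (∑ p ∈ F, ((d p : ℤ))^2) + (∑ q ∈ NF, ((d q : ℤ))^2)
        = (m:ℤ)*(k:ℤ) + (lam:ℤ)*(m:ℤ)*(m:ℤ) - (lam:ℤ)*(m:ℤ) := by
      have e : ∀ (s : Finset P), ∑ q ∈ s, ((d q : ℤ))^2 = ((∑ q ∈ s, d q * d q : ℕ) : ℤ) := by
        intro s
        rw [Nat.cast_sum]
        exact Finset.sum_congr rfl (fun q _ => by push_cast; ring)
      rw [e F, e NF, ← Nat.cast_add, hsplitsq]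
      rcases Nat.eq_zero_or_pos m with h0 | h1
      · rw [h0]; simp
      · have hm1 : ((m - 1 : ℕ) : ℤ) = (m:ℤ) - 1 := by
          rw [Nat.cast_sub h1]; rfl
        push_cast [hm1]
        ring
    have hCS : ((v:ℤ) - (f:ℤ)) * (I:ℤ)^2 + (f:ℤ) * (J:ℤ)^2
        ≤ (f:ℤ) * ((v:ℤ) - (f:ℤ)) * ((m:ℤ)*(k:ℤ) + (lam:ℤ)*(m:ℤ)*(m:ℤ) - (lam:ℤ)*(m:ℤ)) := by
      have hVF0 : (0:ℤ) ≤ (v:ℤ) - (f:ℤ) := by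
        have : (f:ℤ) ≤ (v:ℤ) := by exact_mod_cast (le_of_lt hfv)
        linarith
      have hF0 : (0:ℤ) ≤ (f:ℤ) := Int.natCast_nonneg f
      have t1 : ((v:ℤ) - (f:ℤ)) * (I:ℤ)^2
          ≤ ((v:ℤ) - (f:ℤ)) * ((f:ℤ) * ∑ p ∈ F, ((d p : ℤ))^2) :=
        mul_le_mul_of_nonneg_left cs1 hVF0
      have t2 : (f:ℤ) * (J:ℤ)^2
          ≤ (f:ℤ) * (((v:ℤ) - (f:ℤ)) * ∑ q ∈ NF, ((d q : ℤ))^2) := by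
        apply mul_le_mul_of_nonneg_left _ hF0
        rw [← hVFc]
        exact cs2
      calc ((v:ℤ) - (f:ℤ)) * (I:ℤ)^2 + (f:ℤ) * (J:ℤ)^2
          ≤ ((v:ℤ) - (f:ℤ)) * ((f:ℤ) * ∑ p ∈ F, ((d p : ℤ))^2)
            + (f:ℤ) * (((v:ℤ) - (f:ℤ)) * ∑ q ∈ NF, ((d q : ℤ))^2) := add_le_add t1 t2
        _ = (f:ℤ) * ((v:ℤ) - (f:ℤ))
            * ((∑ p ∈ F, ((d p : ℤ))^2) + (∑ q ∈ NF, ((d q : ℤ))^2)) := by ring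
        _ = _ := by rw [hSAB]
    -- linear constraints
    have h4' : (f:ℤ) * (k:ℤ) ≤ (I:ℤ) + ((v:ℤ) - (m:ℤ)) * (lam:ℤ) := by
      have hc : ((f * k : ℕ) : ℤ) ≤ ((I + (v - m) * lam : ℕ) : ℤ) := by exact_mod_cast h4
      rw [Nat.cast_mul, Nat.cast_add, Nat.cast_mul, hVMc] at hc
      exact hc
    have h6' : (m:ℤ) * (k:ℤ) ≤ (I:ℤ) + ((v:ℤ) - (f:ℤ)) * (lam:ℤ) := by
      have hc : ((m * k : ℕ) : ℤ) ≤ ((I + (v - f) * lam : ℕ) : ℤ) := by exact_mod_cast h6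
      rw [Nat.cast_mul, Nat.cast_add, Nat.cast_mul, hVFc] at hc
      exact hc
    have hlv' : (lam:ℤ) * (v:ℤ) = (k:ℤ)*(k:ℤ) - (k:ℤ) + (lam:ℤ) := by
      have hc : (((v-1) * lam : ℕ) : ℤ) = ((k * (k-1) : ℕ) : ℤ) := by exact_mod_cast hlb.1
      have h1 : ((v - 1 : ℕ) : ℤ) = (v:ℤ) - 1 := by
        rw [Nat.cast_sub (by omega : 1 ≤ v)]; rfl
      have h2 : ((k - 1 : ℕ) : ℤ) = (k:ℤ) - 1 := by
        rw [Nat.cast_sub (by omega : 1 ≤ k)]; rfl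
      rw [Nat.cast_mul, Nat.cast_mul, h1, h2] at hc
      linear_combination hc
    have hJz : (I:ℤ) + (J:ℤ) = (m:ℤ) * (k:ℤ) := by exact_mod_cast hsplitd
    -- numeric bounds
    have hL1 : (1:ℤ) ≤ (lam:ℤ) := by exact_mod_cast hlb.2.1
    have hLK : (lam:ℤ) < (k:ℤ) := by exact_mod_cast hlb.2.2
    have hK2 : (2:ℤ) ≤ (k:ℤ) := by exact_mod_cast hk2
    have hKV : (k:ℤ) < (v:ℤ) := by exact_mod_cast hkv
    have hMV : (m:ℤ) ≤ (v:ℤ) := by exact_mod_cast hmv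
    have hM0 : (0:ℤ) ≤ (m:ℤ) := Int.natCast_nonneg m
    have hI0 : (0:ℤ) ≤ (I:ℤ) := Int.natCast_nonneg I
    have hFV : (f:ℤ) < (v:ℤ) := by exact_mod_cast hfv
    have hKF : (k:ℤ) < (f:ℤ) := by exact_mod_cast hfk'
    -- the contradiction hypothesis
    have hcon' : (k:ℤ) - (lam:ℤ) + 1 ≤ ((f:ℤ) - (k:ℤ)) * ((f:ℤ) - (k:ℤ)) := by
      have h1 : k - lam + 1 ≤ (f - k) * (f - k) := hcon
      have hc : ((k - lam + 1 : ℕ) : ℤ) ≤ (((f-k) * (f-k) : ℕ) : ℤ) := by exact_mod_cast h1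
      rw [Nat.cast_add, Nat.cast_mul, Nat.cast_sub (le_of_lt hlb.2.2),
        Nat.cast_sub (le_of_lt hfk')] at hc
      exact_mod_cast hc
    -- final algebra
    have hV0 : (0:ℤ) ≤ (v:ℤ) := Int.natCast_nonneg v
    have hJzval : (J:ℤ) = (m:ℤ)*(k:ℤ) - (I:ℤ) := by linarith
    rw [hJzval] at hCS
    -- notation
    set K : ℤ := (k:ℤ) with hKdef
    set L : ℤ := (lam:ℤ) with hLdef
    set V : ℤ := (v:ℤ) with hVdef
    set M : ℤ := (m:ℤ) with hMdef
    set Fz : ℤ := (f:ℤ) with hFzdef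
    set Iz : ℤ := (I:ℤ) with hIzdef
    set D : ℤ := V*Iz - M*K*Fz with hDdef
    -- D^2 ≤ n f (v-f) m (v-m)
    have hDS : D^2 ≤ (K-L)*Fz*(V-Fz)*(M*(V-M)) := by
      have m1 : V * ((V - Fz) * Iz^2 + Fz * (M*K - Iz)^2)
          ≤ V * (Fz * (V - Fz) * (M*K + L*M*M - L*M)) :=
        mul_le_mul_of_nonneg_left hCS hV0
      have e1 : D^2 + M^2*K^2*Fz*(V-Fz)
          = V * ((V - Fz) * Iz^2 + Fz * (M*K - Iz)^2) := by
        rw [hDdef]; ring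
      have e2 : (K-L)*Fz*(V-Fz)*(M*(V-M)) + M^2*K^2*Fz*(V-Fz)
          = V * (Fz * (V - Fz) * (M*K + L*M*M - L*M)) := by
        linear_combination (-(Fz*(V-Fz)*M^2)) * hlv'
      linarith
    -- lower bounds for D
    have hLB1 : (V-M)*(K*(Fz-K)+(K-L)) ≤ D := by
      have m1 : V * (Fz * K) ≤ V * (Iz + (V - M) * L) :=
        mul_le_mul_of_nonneg_left h4' hV0
      have e3 : D - (V-M)*(K*(Fz-K)+(K-L))
          = V * (Iz + (V - M) * L) - V * (Fz * K) - (V-M)*(L*V - (K*K-K+L)) := by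
        rw [hDdef]; ring
      have e4 : L*V - (K*K-K+L) = 0 := by linarith
      rw [e4, mul_zero] at e3
      linarith
    have hLB2 : (V-Fz)*(K*(M-K)+(K-L)) ≤ D := by
      have m1 : V * (M * K) ≤ V * (Iz + (V - Fz) * L) :=
        mul_le_mul_of_nonneg_left h6' hV0
      have e3 : D - (V-Fz)*(K*(M-K)+(K-L))
          = V * (Iz + (V - Fz) * L) - V * (M * K) - (V-Fz)*(L*V - (K*K-K+L)) := by
        rw [hDdef]; ring
      have e4 : L*V - (K*K-K+L) = 0 := by linarith
      rw [e4, mul_zero] at e3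
      linarith
    have hLV3 : (3:ℤ) ≤ L*V := by
      have h1 : (1:ℤ)*V ≤ L*V := mul_le_mul_of_nonneg_right hL1 (by linarith)
      linarith
    rcases le_or_gt Fz M with hMF | hMF
    · -- many fixed blocks
      have hMK : K + 1 ≤ M := by linarith
      have htM : (K-L) + 1 ≤ (Fz-K)*(M-K) := by
        have h1 : (Fz-K)*(Fz-K) ≤ (Fz-K)*(M-K) :=
          mul_le_mul_of_nonneg_left (by linarith) (by linarith)
        linarith
      have hLB2pos : 0 < (V-Fz)*(K*(M-K)+(K-L)) := by
        apply mul_pos (by linarith)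
        have : K*1 ≤ K*(M-K) := mul_le_mul_of_nonneg_left (by linarith) (by linarith)
        linarith
      have hD0 : 0 < D := lt_of_lt_of_le hLB2pos hLB2
      have eKey : (K*(Fz-K)+(K-L))*(K*(M-K)+(K-L))
          = (K-L)*Fz*M + (L*V)*((Fz-K)*(M-K)-(K-L)) := by
        linear_combination (-((Fz-K)*(M-K)-(K-L))) * hlv'
      have hInner : (K-L)*Fz*M + L*V ≤ (K*(Fz-K)+(K-L))*(K*(M-K)+(K-L)) := by
        have h1 : L*V * 1 ≤ L*V * ((Fz-K)*(M-K)-(K-L)) :=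
          mul_le_mul_of_nonneg_left (by linarith) (by linarith)
        linarith [eKey]
      have hLB1nn : 0 ≤ (V-M)*(K*(Fz-K)+(K-L)) := by
        apply mul_nonneg (by linarith)
        have : K*1 ≤ K*(Fz-K) := mul_le_mul_of_nonneg_left (by linarith) (by linarith)
        linarith
      have hprod : (V-M)*(K*(Fz-K)+(K-L)) * ((V-Fz)*(K*(M-K)+(K-L))) ≤ D^2 := by
        rw [sq]
        exact mul_le_mul hLB1 hLB2 (le_of_lt hLB2pos) (le_trans hLB1nn hLB1)
      have hchain : (V-M)*(V-Fz)*((K-L)*Fz*M + L*V) ≤ D^2 := by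
        have h1 : (V-M)*(V-Fz)*((K-L)*Fz*M + L*V)
            ≤ (V-M)*(V-Fz)*((K*(Fz-K)+(K-L))*(K*(M-K)+(K-L))) := by
          apply mul_le_mul_of_nonneg_left hInner
          exact mul_nonneg (by linarith) (by linarith)
        have h2 : (V-M)*(V-Fz)*((K*(Fz-K)+(K-L))*(K*(M-K)+(K-L)))
            = (V-M)*(K*(Fz-K)+(K-L)) * ((V-Fz)*(K*(M-K)+(K-L))) := by ring
        linarith [hprod, h2 ▸ h1]
      have hfinal : (V-M)*(V-Fz)*(L*V) ≤ 0 := by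
        have e5 : (V-M)*(V-Fz)*((K-L)*Fz*M + L*V)
            = (K-L)*Fz*(V-Fz)*(M*(V-M)) + (V-M)*(V-Fz)*(L*V) := by ring
        linarith [hDS, hchain]
      have hMeqV : V - M = 0 := by
        rcases le_or_gt (V - M) 0 with h | h
        · linarith
        · exfalso
          have h1 : 1 ≤ V - M := h
          have h2 : 1 ≤ V - Fz := by linarith
          have p1 : (1:ℤ)*1 ≤ (V-M)*(V-Fz) := mul_le_mul h1 h2 (by norm_num) (by linarith)
          have p2 : (1:ℤ)*3 ≤ ((V-M)*(V-Fz))*(L*V) :=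
            mul_le_mul (by linarith) hLV3 (by norm_num)
              (mul_nonneg (by linarith) (by linarith))
          linarith
      have hS0 : D^2 ≤ 0 := by
        have : M*(V-M) = 0 := by rw [hMeqV, mul_zero]
        rw [this] at hDS
        linarith [hDS]
      have : 0 < D^2 := pow_pos hD0 2
      linarith
    · -- few fixed blocks
      have hLB1pos : 0 < (V-M)*(K*(Fz-K)+(K-L)) := by
        apply mul_pos (by linarith)
        have : K*1 ≤ K*(Fz-K) := mul_le_mul_of_nonneg_left (by linarith) (by linarith)
        linarith
      have hD0 : 0 < D := lt_of_lt_of_le hLB1pos hLB1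
      have eB : (K*(Fz-K)+(K-L))^2
          = (K-L)*Fz*(Fz-1) + ((Fz-K)*(Fz-K)-(K-L))*(L*V) + (K-L)*Fz := by
        linear_combination (-((Fz-K)*(Fz-K)-(K-L))) * hlv'
      have key1 : (K-L)*Fz*M + 1 ≤ (K*(Fz-K)+(K-L))^2 := by
        have h1 : (K-L)*Fz*M ≤ (K-L)*Fz*(Fz-1) := by
          apply mul_le_mul_of_nonneg_left (by linarith)
          exact mul_nonneg (by linarith) (by linarith)
        have h2 : L*V * 1 ≤ L*V * ((Fz-K)*(Fz-K)-(K-L)) :=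
          mul_le_mul_of_nonneg_left (by linarith) (by linarith)
        have h3 : (0:ℤ) ≤ (K-L)*Fz := mul_nonneg (by linarith) (by linarith)
        linarith [eB, h1, h2, h3, hLV3]
      have hSS : (K-L)*Fz*(V-Fz)*(M*(V-M)) ≤ (K-L)*Fz*M*(V-M)^2 := by
        have h0 : 0 ≤ (K-L)*Fz*M*(V-M) := by
          apply mul_nonneg
          apply mul_nonneg
          apply mul_nonneg (by linarith) (by linarith)
          · exact hM0
          · linarith
        have h1 : (K-L)*Fz*M*(V-M) * (V-Fz) ≤ (K-L)*Fz*M*(V-M) * (V-M) :=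
          mul_le_mul_of_nonneg_left (by linarith) h0
        have e1 : (K-L)*Fz*(V-Fz)*(M*(V-M)) = (K-L)*Fz*M*(V-M)*(V-Fz) := by ring
        have e2 : (K-L)*Fz*M*(V-M)^2 = (K-L)*Fz*M*(V-M)*(V-M) := by ring
        linarith [h1]
      have hLB1sq : ((V-M)*(K*(Fz-K)+(K-L)))^2 ≤ D^2 := by
        apply sq_le_sq'
        · linarith
        · exact hLB1
      have hexp : ((V-M)*(K*(Fz-K)+(K-L)))^2
          = (V-M)^2 * (K*(Fz-K)+(K-L))^2 := by ring
      have hstep : (V-M)^2 * ((K-L)*Fz*M + 1) ≤ (V-M)^2 * (K*(Fz-K)+(K-L))^2 :=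
        mul_le_mul_of_nonneg_left key1 (sq_nonneg _)
      have hVM2 : 2 ≤ V - M := by linarith
      have e6 : (V-M)^2*((K-L)*Fz*M + 1) = (K-L)*Fz*M*(V-M)^2 + (V-M)^2 := by ring
      have e7 : (2:ℤ)*2 ≤ (V-M)*(V-M) := mul_le_mul hVM2 hVM2 (by norm_num) (by linarith)
      have e8 : (V-M)^2 = (V-M)*(V-M) := sq (V-M) ▸ rfl
      linarith [hDS, hSS, hLB1sq, hexp, hstep, e6, e7, sq (V-M) ▸ e7]
  -- conclude
  by_cases hfk : f ≤ k
  · have h1 : (f : ℝ) ≤ (k : ℝ) := by exact_mod_cast hfk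
    have h2 : (0:ℝ) ≤ Real.sqrt ((k:ℝ) - lam) := Real.sqrt_nonneg _
    calc (f : ℝ) ≤ (k : ℝ) := h1
      _ ≤ k + Real.sqrt ((k:ℝ) - lam) := by linarith
  · push_neg at hfk
    have hlamk : lam ≤ k := le_of_lt hlb.2.2
    have h1 : ((f - k : ℕ) : ℝ) ^ 2 ≤ (k : ℝ) - lam := by
      have : ((f-k)*(f-k) : ℕ) ≤ ((k - lam : ℕ)) := main
      have h2 : (((f-k)*(f-k) : ℕ) : ℝ) ≤ (((k - lam : ℕ)) : ℝ) := by exact_mod_cast this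
      rw [Nat.cast_mul, Nat.cast_sub hlamk] at h2
      rw [sq]
      exact h2
    have h3 : ((f - k : ℕ) : ℝ) ≤ Real.sqrt ((k:ℝ) - lam) := by
      rw [← Real.sqrt_sq (by positivity : (0:ℝ) ≤ ((f - k : ℕ) : ℝ))]
      exact Real.sqrt_le_sqrt h1
    have h4 : ((f - k : ℕ) : ℝ) = (f : ℝ) - k := by
      rw [Nat.cast_sub (le_of_lt hfk)]
    linarith [h3, h4.symm.le]
end

section
/- Let m and v₀ be integers with m ≥ 4 and v₀ ≥ 5, and suppose (m, v₀) ≠ (4,5) and (m, v₀) ≠ (4,6). Then, as real numbers, √(2·v₀^{m−1} − 2·√(2·v₀^{m−1}) + 2) − 1 ≥ m(v₀−1). In other words, the inequality √(2·v₀^{m−1} − 2·√(2·v₀^{m−1}) + 2) − 1 < m(v₀−1) has no integer solutions with m ≥ 4, v₀ ≥ 5 other than (m,v₀) = (4,5) and (4,6). -/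
lemma key5 : ∀ n v : ℕ, 5 ≤ v → ((n + 5) * (v - 1) + 2) ^ 2 ≤ 2 * v ^ (n + 4) := by
  intro n
  induction n with
  | zero =>
    intro v hv
    obtain ⟨w, rfl⟩ : ∃ w, v = w + 5 := ⟨v - 5, by omega⟩
    have : w + 5 - 1 = w + 4 := by omega
    rw [this, show 0 + 4 = 4 from rfl]
    nlinarith [sq_nonneg w, sq_nonneg (w * w), Nat.zero_le w]
  | succ n ih =>
    intro v hv
    have h := ih v hv
    obtain ⟨w, rfl⟩ : ∃ w, v = w + 5 := ⟨v - 5, by omega⟩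
    have hw : w + 5 - 1 = w + 4 := by omega
    rw [hw] at h ⊢
    have hpow : (w + 5) ^ (n + 1 + 4) = (w + 5) ^ (n + 4) * (w + 5) := by ring
    rw [hpow]
    set a := (n + 5) * (w + 4) + 2 with ha
    have hb : (n + 1 + 5) * (w + 4) + 2 = a + (w + 4) := by ring
    rw [hb]
    have hwa : w + 4 ≤ a := by nlinarith
    calc (a + (w + 4)) ^ 2 ≤ (2 * a) ^ 2 := by nlinarith
      _ = 4 * a ^ 2 := by ring
      _ ≤ (w + 5) * a ^ 2 := by nlinarith [sq_nonneg a]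
      _ ≤ (w + 5) * (2 * (w + 5) ^ (n + 4)) := by
          exact Nat.mul_le_mul_left _ h
      _ = 2 * ((w + 5) ^ (n + 4) * (w + 5)) := by ring

lemma key4 : ∀ v : ℕ, 7 ≤ v → (4 * (v - 1) + 2) ^ 2 ≤ 2 * v ^ 3 := by
  intro v hv
  obtain ⟨w, rfl⟩ : ∃ w, v = w + 7 := ⟨v - 7, by omega⟩
  have : w + 7 - 1 = w + 6 := by omega
  rw [this]
  nlinarith [sq_nonneg w]

lemma keyAll (m v₀ : ℕ) (hm : 4 ≤ m) (hv₀ : 5 ≤ v₀)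
    (h1 : (m, v₀) ≠ (4, 5)) (h2 : (m, v₀) ≠ (4, 6)) :
    (m * (v₀ - 1) + 2) ^ 2 ≤ 2 * v₀ ^ (m - 1) := by
  rcases eq_or_lt_of_le hm with h | h
  · subst h
    have hv7 : 7 ≤ v₀ := by
      rcases Nat.lt_or_ge v₀ 7 with h | h
      · interval_cases v₀ <;> simp_all
      · exact h
    simpa using key4 v₀ hv7
  · obtain ⟨n, rfl⟩ : ∃ n, m = n + 5 := ⟨m - 5, by omega⟩
    have := key5 n v₀ hv₀
    simpa using this

/-- For integers `m ≥ 4` and `v₀ ≥ 5` with `(m,v₀) ≠ (4,5)` and `(m,v₀) ≠ (4,6)`,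
we have `√(2·v₀^(m-1) - 2·√(2·v₀^(m-1)) + 2) - 1 ≥ m(v₀-1)` as real numbers. -/
theorem stmt_10 (m v₀ : ℕ) (hm : 4 ≤ m) (hv₀ : 5 ≤ v₀)
    (h1 : (m, v₀) ≠ (4, 5)) (h2 : (m, v₀) ≠ (4, 6)) :
    Real.sqrt (2 * (v₀ : ℝ) ^ (m - 1) - 2 * Real.sqrt (2 * (v₀ : ℝ) ^ (m - 1)) + 2) - 1 ≥
      (m : ℝ) * ((v₀ : ℝ) - 1) := by
  have key := keyAll m v₀ hm hv₀ h1 h2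
  set t : ℝ := 2 * (v₀ : ℝ) ^ (m - 1) with ht
  have ht0 : (0 : ℝ) ≤ t := by positivity
  set s : ℝ := Real.sqrt t with hs
  have hs0 : 0 ≤ s := Real.sqrt_nonneg t
  have hsq : s ^ 2 = t := Real.sq_sqrt ht0
  -- cast key to ℝ
  have keyR : ((m : ℝ) * ((v₀ : ℝ) - 1) + 2) ^ 2 ≤ t := by
    have h1 : ((v₀ : ℝ) - 1) = ((v₀ - 1 : ℕ) : ℝ) := by
      push_cast [Nat.cast_sub (show 1 ≤ v₀ by omega)]; ring
    rw [ht, h1]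
    exact_mod_cast key
  have hstep : (m : ℝ) * ((v₀ : ℝ) - 1) + 2 ≤ s := by
    rw [hs]
    have hx : (0 : ℝ) ≤ (m : ℝ) * ((v₀ : ℝ) - 1) + 2 := by
      have : (1 : ℝ) ≤ (v₀ : ℝ) := by exact_mod_cast (by omega : 1 ≤ v₀)
      nlinarith [Nat.cast_nonneg (α := ℝ) m]
    exact (Real.le_sqrt hx ht0).mpr keyR
  have h3 : (s - 1) ^ 2 ≤ t - 2 * s + 2 := by nlinarith
  have h4 : s - 1 ≤ Real.sqrt (t - 2 * s + 2) := by
    calc s - 1 ≤ |s - 1| := le_abs_self _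
      _ = Real.sqrt ((s - 1) ^ 2) := (Real.sqrt_sq_eq_abs _).symm
      _ ≤ Real.sqrt (t - 2 * s + 2) := Real.sqrt_le_sqrt h3
  linarith
end

section
/- Let k, λ, a, m, v₀ be positive integers with v₀ ≥ 2, satisfying k·a = m·λ·(v₀−1) and λ·(v₀ᵐ − 1) = k(k−1). Then v₀ − 1 divides m·a·(a+1). -/
/-- Binomial fact: `(1+d)^m ≡ 1 + m·d (mod d²)`. -/
lemma aux_binom (d : ℤ) : ∀ m : ℕ, d ^ 2 ∣ (1 + d) ^ m - (1 + m * d)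
  | 0 => by simp
  | (n + 1) => by
    obtain ⟨c, hc⟩ := aux_binom d n
    refine ⟨(1 + d) * c + n, ?_⟩
    have : (1 + d) ^ (n + 1) = (1 + d) * ((1 + d) ^ n - (1 + n * d)) + (1 + d) * (1 + n * d) := by
      ring
    rw [this, hc]
    push_cast
    ring

/-- If `k·a = m·λ·(v₀-1)` and `λ·(v₀^m - 1) = k(k-1)`, then `v₀ - 1` divides `m·a·(a+1)`. -/
theorem stmt_12 (k lam a m v₀ : ℕ) (hk : 1 ≤ k) (hlam : 1 ≤ lam) (ha : 1 ≤ a)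
    (hm : 1 ≤ m) (hv₀ : 2 ≤ v₀)
    (hka : k * a = m * lam * (v₀ - 1))
    (hsym : lam * (v₀ ^ m - 1) = k * (k - 1)) :
    v₀ - 1 ∣ m * a * (a + 1) := by
  set D : ℤ := (v₀ : ℤ) - 1 with hD
  have hDpos : 0 < D := by
    have : (2 : ℤ) ≤ (v₀ : ℤ) := by exact_mod_cast hv₀
    omega
  have hpow : 1 ≤ v₀ ^ m := Nat.one_le_pow _ _ (by omega)
  -- cast hypotheses to ℤ
  have hka' : (k : ℤ) * a = m * lam * D := by
    have := hka
    have h1 : ((k * a : ℕ) : ℤ) = ((m * lam * (v₀ - 1) : ℕ) : ℤ) := by exact_mod_cast this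
    push_cast [Nat.cast_sub (by omega : 1 ≤ v₀)] at h1
    rw [hD]; linarith
  have hsym' : (lam : ℤ) * ((v₀ : ℤ) ^ m - 1) = k * ((k : ℤ) - 1) := by
    have h1 : ((lam * (v₀ ^ m - 1) : ℕ) : ℤ) = ((k * (k - 1) : ℕ) : ℤ) := by exact_mod_cast hsym
    push_cast [Nat.cast_sub hpow, Nat.cast_sub hk] at h1
    linarith
  have hlam' : (lam : ℤ) ≠ 0 := by positivity
  -- key equation: a²(v₀^m - 1) = m·D·(m·lam·D - a)
  have key : (a : ℤ) ^ 2 * ((v₀ : ℤ) ^ m - 1) = m * D * (m * lam * D - a) := by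
    apply mul_left_cancel₀ hlam'
    have : (lam : ℤ) * ((a : ℤ) ^ 2 * ((v₀ : ℤ) ^ m - 1))
        = ((k : ℤ) * a) * ((k : ℤ) * a - a) := by
      have := hsym'; nlinarith [hsym']
    rw [this, hka']; ring
  -- binomial: D² ∣ (v₀^m - 1) - m·D
  have hbin : D ^ 2 ∣ ((v₀ : ℤ) ^ m - 1) - m * D := by
    have h := aux_binom D m
    have hv : (1 : ℤ) + D = (v₀ : ℤ) := by rw [hD]; ring
    rw [hv] at h
    have : (v₀ : ℤ) ^ m - (1 + m * D) = ((v₀ : ℤ) ^ m - 1) - m * D := by ring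
    rwa [this] at h
  -- then D² ∣ D · (m·a·(a+1))
  have hdvd2 : D ^ 2 ∣ D * ((m : ℤ) * a * (a + 1)) := by
    obtain ⟨c, hc⟩ := hbin
    refine ⟨(m : ℤ) * m * lam - a ^ 2 * c, ?_⟩
    have hexp : ((v₀ : ℤ) ^ m - 1) = D ^ 2 * c + m * D := by linarith
    have key2 : (a : ℤ) ^ 2 * (D ^ 2 * c + m * D) = m * D * (m * lam * D - a) := by
      rw [← hexp]; exact key
    linear_combination key2
  have hdvd : D ∣ (m : ℤ) * a * (a + 1) := by
    have h2 : D * D ∣ D * ((m : ℤ) * a * (a + 1)) := by rwa [pow_two] at hdvd2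
    exact (mul_dvd_mul_iff_left (show D ≠ 0 by omega)).mp h2
  have : ((v₀ - 1 : ℕ) : ℤ) ∣ ((m * a * (a + 1) : ℕ) : ℤ) := by
    push_cast [Nat.cast_sub (by omega : 1 ≤ v₀)]
    exact_mod_cast hdvd
  exact_mod_cast this
end

section
/- Let k, λ, a, m, v₀ be positive integers with v₀ ≥ 5 and m ≥ 2, satisfying k·a = m·λ·(v₀−1) and λ·(v₀ᵐ − 1) = k(k−1). Then a²·(5m−9) < m²·λ; equivalently, a < (m/√(5m−9))·√λ as real numbers. -/
lemma aux13 (m w : ℕ) (hm : 2 ≤ m) (hw : 4 ≤ w) :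
    (5 * m - 9) * (w * w) + 1 ≤ (w + 1) ^ m := by
  induction m with
  | zero => omega
  | succ n ih =>
    rcases Nat.lt_or_ge n 2 with h | h
    · have hn1 : n = 1 := by omega
      subst hn1
      have h1 : 5 * (1 + 1) - 9 = 1 := by norm_num
      rw [h1]
      have hp : (w + 1) ^ (1 + 1) = w * w + 2 * w + 1 := by ring
      nlinarith [hp]
    · have ih' := ih h
      have h2 : (w + 1) ^ 2 ≤ (w + 1) ^ n := Nat.pow_le_pow_right (by omega) h
      have h5 : 5 * w ≤ (w + 1) ^ n := by nlinarith
      have h5' : 5 * (w * w) ≤ (w + 1) ^ n * w := by nlinarith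
      have hpow : (w + 1) ^ (n + 1) = (w + 1) ^ n * w + (w + 1) ^ n := by ring
      have he : 5 * (n + 1) - 9 = (5 * n - 9) + 5 := by omega
      rw [he, hpow, add_mul]
      nlinarith

/-- If `v₀ ≥ 5`, `m ≥ 2`, `k·a = m·λ·(v₀-1)` and `λ·(v₀^m - 1) = k(k-1)`, then
`a²·(5m-9) < m²·λ`. -/
theorem stmt_13 (k lam a m v₀ : ℕ) (hk : 1 ≤ k) (hlam : 1 ≤ lam) (ha : 1 ≤ a)
    (hm : 2 ≤ m) (hv₀ : 5 ≤ v₀)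
    (hka : k * a = m * lam * (v₀ - 1))
    (hsym : lam * (v₀ ^ m - 1) = k * (k - 1)) :
    a ^ 2 * (5 * m - 9) < m ^ 2 * lam := by
  obtain ⟨w, rfl⟩ : ∃ w, v₀ = w + 5 := ⟨v₀ - 5, by omega⟩
  have e1 : w + 5 - 1 = w + 4 := by omega
  rw [e1] at hka
  have key := aux13 m (w + 4) hm (by omega)
  have e2 : w + 4 + 1 = w + 5 := by omega
  rw [e2] at key
  have key2 : (5 * m - 9) * ((w + 4) * (w + 4)) ≤ (w + 5) ^ m - 1 :=
    Nat.le_sub_of_add_le key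
  have key3 : lam * ((5 * m - 9) * ((w + 4) * (w + 4))) ≤ k * (k - 1) := by
    rw [← hsym]
    exact Nat.mul_le_mul_left lam key2
  have hq : a ^ 2 * (5 * m - 9) * (k * k)
      = m ^ 2 * lam * (lam * ((5 * m - 9) * ((w + 4) * (w + 4)))) := by
    have : a ^ 2 * (5 * m - 9) * (k * k) = (k * a) * (k * a) * (5 * m - 9) := by ring
    rw [this, hka]
    ring
  have hcancel : k - 1 + 1 = k := Nat.sub_add_cancel hk
  have hlt : k * (k - 1) < k * k := by nlinarith [hcancel]
  have big : a ^ 2 * (5 * m - 9) * (k * k) < m ^ 2 * lam * (k * k) := by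
    rw [hq]
    calc m ^ 2 * lam * (lam * ((5 * m - 9) * ((w + 4) * (w + 4))))
        ≤ m ^ 2 * lam * (k * (k - 1)) := Nat.mul_le_mul_left _ key3
      _ < m ^ 2 * lam * (k * k) := by
          have hpos : 0 < m ^ 2 * lam := by positivity
          exact mul_lt_mul_of_pos_left hlt hpos
  exact Nat.lt_of_mul_lt_mul_right big
end

section
/- Let Δ be a finite set with |Δ| = v₀ ≥ 2 and let m ≥ 1. Let 𝒟 be a symmetric 2-(v₀ᵐ, k, λ) design whose point set is the Cartesian power 𝒫 = Δᵐ, and let g be a non-identity automorphism of 𝒟 that fixes pointwise every m-tuple whose first coordinate is α and every m-tuple whose first coordinate is γ, for two distinct elements α, γ ∈ Δ. Then 2·v₀^{m−1} ≤ k + √(k−λ), and consequently 2·v₀^{m−1} < k + √k. -/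
open Finset
set_option maxHeartbeats 1000000


lemma aux_point_count {P : Type*} [Fintype P] [DecidableEq P]
    (ℬ : Finset (Finset P)) (k lam : ℕ)
    (hbk : ∀ B ∈ ℬ, B.card = k)
    (hlam : ∀ x y : P, x ≠ y → (ℬ.filter fun B => x ∈ B ∧ y ∈ B).card = lam)
    (p : P) :
    (ℬ.filter fun B => p ∈ B).card * (k - 1) = lam * (Fintype.card P - 1) := by
  have key : ∀ B ∈ ℬ, (∑ q ∈ Finset.univ.erase p, if p ∈ B ∧ q ∈ B then 1 else 0)
      = if p ∈ B then k - 1 else 0 := by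
    intro B hB
    by_cases hp : p ∈ B
    · simp only [hp, true_and, if_true]
      rw [← Finset.card_filter]
      have : (Finset.univ.erase p).filter (fun q => q ∈ B) = B.erase p := by
        ext q; simp [Finset.mem_erase, and_comm]
      rw [this, Finset.card_erase_of_mem hp, hbk B hB]
    · simp [hp]
  calc (ℬ.filter fun B => p ∈ B).card * (k - 1)
      = ∑ B ∈ ℬ.filter (fun B => p ∈ B), (k - 1) := by
        rw [Finset.sum_const, smul_eq_mul]
    _ = ∑ B ∈ ℬ, if p ∈ B then k - 1 else 0 := Finset.sum_filter _ _
    _ = ∑ B ∈ ℬ, ∑ q ∈ Finset.univ.erase p, if p ∈ B ∧ q ∈ B then 1 else 0 :=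
        (Finset.sum_congr rfl key).symm
    _ = ∑ q ∈ Finset.univ.erase p, ∑ B ∈ ℬ, if p ∈ B ∧ q ∈ B then 1 else 0 :=
        Finset.sum_comm
    _ = ∑ q ∈ Finset.univ.erase p, lam := by
        refine Finset.sum_congr rfl fun q hq => ?_
        rw [← Finset.card_filter]
        exact hlam p q (Ne.symm (Finset.mem_erase.mp hq).1)
    _ = lam * (Fintype.card P - 1) := by
        rw [Finset.sum_const, smul_eq_mul, Finset.card_erase_of_mem (Finset.mem_univ p),
          Finset.card_univ, mul_comm]

lemma aux_total {P : Type*} [Fintype P] [DecidableEq P]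
    (ℬ : Finset (Finset P)) (k : ℕ)
    (hbk : ∀ B ∈ ℬ, B.card = k) :
    ∑ p : P, (ℬ.filter fun B => p ∈ B).card = ℬ.card * k := by
  calc ∑ p : P, (ℬ.filter fun B => p ∈ B).card
      = ∑ p : P, ∑ B ∈ ℬ, if p ∈ B then 1 else 0 := by
        refine Finset.sum_congr rfl fun p _ => Finset.card_filter _ _
    _ = ∑ B ∈ ℬ, ∑ p : P, if p ∈ B then 1 else 0 := Finset.sum_comm
    _ = ∑ B ∈ ℬ, B.card := by
        refine Finset.sum_congr rfl fun B _ => ?_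
        rw [← Finset.card_filter, Finset.filter_univ_mem]
    _ = ℬ.card * k := by
        rw [Finset.sum_congr rfl hbk, Finset.sum_const, smul_eq_mul]

lemma aux_rep {P : Type*} [Fintype P] [DecidableEq P]
    (ℬ : Finset (Finset P)) (k lam : ℕ) (hk2 : 2 ≤ k)
    (hbk : ∀ B ∈ ℬ, B.card = k)
    (hlam : ∀ x y : P, x ≠ y → (ℬ.filter fun B => x ∈ B ∧ y ∈ B).card = lam)
    (hsym : ℬ.card = Fintype.card P) (hv : 0 < Fintype.card P)
    (p : P) : (ℬ.filter fun B => p ∈ B).card = k := by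
  have hcongr : ∀ q : P, (ℬ.filter fun B => q ∈ B).card = (ℬ.filter fun B => p ∈ B).card := by
    intro q
    have h1 := aux_point_count ℬ k lam hbk hlam p
    have h2 := aux_point_count ℬ k lam hbk hlam q
    exact Nat.eq_of_mul_eq_mul_right (by omega) (h2.trans h1.symm)
  have htot := aux_total ℬ k hbk
  rw [Finset.sum_congr rfl (fun q _ => hcongr q), Finset.sum_const, smul_eq_mul,
    Finset.card_univ, hsym] at htot
  exact Nat.eq_of_mul_eq_mul_left hv htot

lemma aux_dual {P : Type*} [Fintype P] [DecidableEq P]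
    (ℬ : Finset (Finset P)) (k lam : ℕ) (hk2 : 2 ≤ k) (hlam1 : 1 ≤ lam)
    (hbk : ∀ B ∈ ℬ, B.card = k)
    (hlam : ∀ x y : P, x ≠ y → (ℬ.filter fun B => x ∈ B ∧ y ∈ B).card = lam)
    (hsym : ℬ.card = Fintype.card P) (hv : 0 < Fintype.card P)
    (B₀ : Finset P) (hB₀ : B₀ ∈ ℬ) :
    ∀ B ∈ ℬ, B ≠ B₀ → (B ∩ B₀).card = lam := by
  classical
  set v := Fintype.card P with hvdef
  have hv1 : 1 ≤ v := hv
  set E := ℬ.erase B₀ with hE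
  have hnp : Nonempty P := Fintype.card_pos_iff.mp hv
  obtain ⟨p0⟩ := hnp
  have hlamv : lam * (v - 1) = k * (k - 1) := by
    have h1 := aux_point_count ℬ k lam hbk hlam p0
    rw [aux_rep ℬ k lam hk2 hbk hlam hsym hv] at h1
    exact h1.symm
  have hEcard : E.card = v - 1 := by
    rw [hE, Finset.card_erase_of_mem hB₀, hsym]
  have hB₀k : B₀.card = k := hbk B₀ hB₀
  -- number of blocks ≠ B₀ through a point of B₀
  have hrerase : ∀ p ∈ B₀, (E.filter fun B => p ∈ B).card = k - 1 := by
    intro p hp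
    rw [hE, Finset.filter_erase, Finset.card_erase_of_mem
      (Finset.mem_filter.mpr ⟨hB₀, hp⟩), aux_rep ℬ k lam hk2 hbk hlam hsym hv]
  -- number of blocks ≠ B₀ through two distinct points of B₀
  have hlerase : ∀ p ∈ B₀, ∀ q ∈ B₀, p ≠ q →
      (E.filter fun B => p ∈ B ∧ q ∈ B).card = lam - 1 := by
    intro p hp q hq hpq
    rw [hE, Finset.filter_erase, Finset.card_erase_of_mem
      (Finset.mem_filter.mpr ⟨hB₀, hp, hq⟩), hlam p q hpq]
  -- intersection card as a sum of indicators
  have hind : ∀ X : Finset P, (X ∩ B₀).card = ∑ p ∈ B₀, if p ∈ X then 1 else 0 := by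
    intro X
    rw [← Finset.card_filter]
    congr 1
    ext q; simp [and_comm]
  -- first moment
  have s1 : ∑ X ∈ E, (X ∩ B₀).card = lam * (v - 1) := by
    calc ∑ X ∈ E, (X ∩ B₀).card
        = ∑ X ∈ E, ∑ p ∈ B₀, if p ∈ X then 1 else 0 :=
          Finset.sum_congr rfl fun X _ => hind X
      _ = ∑ p ∈ B₀, ∑ X ∈ E, if p ∈ X then 1 else 0 := Finset.sum_comm
      _ = ∑ p ∈ B₀, (k - 1) := by
          refine Finset.sum_congr rfl fun p hp => ?_
          rw [← Finset.card_filter]; exact hrerase p hp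
      _ = k * (k - 1) := by rw [Finset.sum_const, smul_eq_mul, hB₀k]
      _ = lam * (v - 1) := hlamv.symm
  -- second moment
  have s2 : ∑ X ∈ E, (X ∩ B₀).card ^ 2 = lam * lam * (v - 1) := by
    have hsq : ∀ X : Finset P, (X ∩ B₀).card ^ 2
        = ∑ p ∈ B₀, ∑ q ∈ B₀, if p ∈ X ∧ q ∈ X then 1 else 0 := by
      intro X
      rw [hind X, sq, Finset.sum_mul_sum]
      refine Finset.sum_congr rfl fun p _ => Finset.sum_congr rfl fun q _ => ?_
      by_cases h1 : p ∈ X <;> by_cases h2 : q ∈ X <;> simp [h1, h2]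
    calc ∑ X ∈ E, (X ∩ B₀).card ^ 2
        = ∑ X ∈ E, ∑ p ∈ B₀, ∑ q ∈ B₀, if p ∈ X ∧ q ∈ X then 1 else 0 :=
          Finset.sum_congr rfl fun X _ => hsq X
      _ = ∑ p ∈ B₀, ∑ X ∈ E, ∑ q ∈ B₀, if p ∈ X ∧ q ∈ X then 1 else 0 := Finset.sum_comm
      _ = ∑ p ∈ B₀, ∑ q ∈ B₀, ∑ X ∈ E, if p ∈ X ∧ q ∈ X then 1 else 0 :=
          Finset.sum_congr rfl fun p _ => Finset.sum_comm
      _ = ∑ p ∈ B₀, (k - 1) * lam := by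
          refine Finset.sum_congr rfl fun p hp => ?_
          have hsplit : B₀ = insert p (B₀.erase p) := (Finset.insert_erase hp).symm
          rw [hsplit]
          rw [Finset.sum_insert (Finset.notMem_erase p B₀)]
          have hdiag : ∑ X ∈ E, (if p ∈ X ∧ p ∈ X then 1 else 0) = k - 1 := by
            simp only [and_self]
            rw [← Finset.card_filter]; exact hrerase p hp
          have hoff : ∀ q ∈ B₀.erase p, ∑ X ∈ E, (if p ∈ X ∧ q ∈ X then 1 else 0)
              = lam - 1 := by
            intro q hq
            rw [← Finset.card_filter]
            exact hlerase p hp q (Finset.mem_of_mem_erase hq)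
              (Ne.symm (Finset.mem_erase.mp hq).1)
          rw [hdiag, Finset.sum_congr rfl hoff, Finset.sum_const, smul_eq_mul,
            Finset.card_erase_of_mem hp, hB₀k]
          obtain ⟨l, rfl⟩ : ∃ l, lam = l + 1 := ⟨lam - 1, by omega⟩
          simp only [Nat.add_sub_cancel, Nat.mul_succ]
          exact Nat.add_comm _ _
      _ = lam * lam * (v - 1) := by
          rw [Finset.sum_const, smul_eq_mul, hB₀k]
          calc k * ((k - 1) * lam) = (k * (k - 1)) * lam := by ring
            _ = (lam * (v - 1)) * lam := by rw [hlamv]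
            _ = lam * lam * (v - 1) := by ring
  -- zero variance over ℤ
  have z1 : ∑ X ∈ E, ((X ∩ B₀).card : ℤ) = (lam : ℤ) * ((v : ℤ) - 1) := by
    have h := congrArg (Nat.cast : ℕ → ℤ) s1
    push_cast [Nat.cast_sub hv1] at h
    exact h
  have z2 : ∑ X ∈ E, ((X ∩ B₀).card : ℤ) ^ 2 = (lam : ℤ) * lam * ((v : ℤ) - 1) := by
    have h := congrArg (Nat.cast : ℕ → ℤ) s2
    push_cast [Nat.cast_sub hv1] at h
    exact h
  have hzero : ∑ X ∈ E, (((X ∩ B₀).card : ℤ) - lam) ^ 2 = 0 := by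
    have expand : ∀ X ∈ E, (((X ∩ B₀).card : ℤ) - lam) ^ 2
        = ((X ∩ B₀).card : ℤ) ^ 2 - 2 * lam * ((X ∩ B₀).card : ℤ) + lam ^ 2 := by
      intro X _; ring
    rw [Finset.sum_congr rfl expand, Finset.sum_add_distrib, Finset.sum_sub_distrib,
      ← Finset.mul_sum, Finset.sum_const, z1, z2, hEcard, nsmul_eq_mul]
    have : ((v - 1 : ℕ) : ℤ) = (v : ℤ) - 1 := by push_cast [Nat.cast_sub hv1]; ring
    rw [this]; ring
  intro B hB hne
  have hBE : B ∈ E := Finset.mem_erase.mpr ⟨hne, hB⟩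
  have := (Finset.sum_eq_zero_iff_of_nonneg (fun X _ => sq_nonneg _)).mp hzero B hBE
  have h0 : ((B ∩ B₀).card : ℤ) - lam = 0 := by
    exact pow_eq_zero_iff (by norm_num) |>.mp this
  have : ((B ∩ B₀).card : ℤ) = lam := by linarith
  exact_mod_cast this


lemma aux_lamk {P : Type*} [Fintype P] [DecidableEq P]
    (ℬ : Finset (Finset P)) (k lam : ℕ) (hk2 : 2 ≤ k)
    (hkv : k < Fintype.card P)
    (hbk : ∀ B ∈ ℬ, B.card = k)
    (hlam : ∀ x y : P, x ≠ y → (ℬ.filter fun B => x ∈ B ∧ y ∈ B).card = lam)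
    (hsym : ℬ.card = Fintype.card P) : lam < k := by
  have hv : 0 < Fintype.card P := lt_trans (by omega) hkv
  obtain ⟨p0⟩ := Fintype.card_pos_iff.mp hv
  have hlamv := aux_point_count ℬ k lam hbk hlam p0
  rw [aux_rep ℬ k lam hk2 hbk hlam hsym hv p0] at hlamv
  rcases Nat.lt_or_ge lam k with h | h
  · exact h
  · exfalso
    have h1 : k * (k - 1) < k * (Fintype.card P - 1) := by
      have hlt : k - 1 < Fintype.card P - 1 := by omega
      exact mul_lt_mul_of_pos_left hlt (by omega)
    have h2 : k * (Fintype.card P - 1) ≤ lam * (Fintype.card P - 1) :=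
      Nat.mul_le_mul_right _ h
    omega

lemma aux_hyper {Δ : Type*} [Fintype Δ] [DecidableEq Δ] {m : ℕ} (i0 : Fin m) (α : Δ) :
    (Finset.univ.filter fun x : Fin m → Δ => x i0 = α).card
      = (Fintype.card Δ) ^ (m - 1) := by
  rw [← Fintype.card_subtype]
  have e : {x : Fin m → Δ // x i0 = α} ≃ ({j : Fin m // j ≠ i0} → Δ) :=
    { toFun := fun x j => x.1 j.1
      invFun := fun y => ⟨fun j => if h : j = i0 then α else y ⟨j, h⟩, by simp⟩
      left_inv := by
        rintro ⟨x, hx⟩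
        apply Subtype.ext
        funext j
        by_cases h : j = i0
        · subst h; simp [hx]
        · simp [h]
      right_inv := by
        intro y
        funext j
        simp [j.2] }
  rw [Fintype.card_congr e, Fintype.card_fun]
  congr 1
  have h := Fintype.card_subtype_compl (fun x : Fin m => x = i0)
  simp only [Fintype.card_subtype_eq, Fintype.card_fin] at h
  exact h


theorem aux_fix_bound {P : Type*} [Fintype P] [DecidableEq P]
    (ℬ : Finset (Finset P)) (k lam : ℕ) (hk2 : 2 ≤ k) (hlam1 : 1 ≤ lam)
    (hkv : k < Fintype.card P)
    (hbk : ∀ B ∈ ℬ, B.card = k)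
    (hlam : ∀ x y : P, x ≠ y → (ℬ.filter fun B => x ∈ B ∧ y ∈ B).card = lam)
    (hsym : ℬ.card = Fintype.card P)
    (g : Equiv.Perm P) (hg : g ≠ 1)
    (hgB : ∀ B ∈ ℬ, B.image ⇑g ∈ ℬ) :
    ((Finset.univ.filter fun p : P => g p = p).card : ℝ)
      ≤ k + Real.sqrt ((k : ℝ) - lam) := by
  classical
  set v := Fintype.card P with hvdef
  have hv : 0 < v := lt_trans (by omega) hkv
  have hv1 : 1 ≤ v := hv
  set F := Finset.univ.filter (fun p : P => g p = p) with hF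
  set f := F.card with hf
  rcases Nat.eq_zero_or_pos f with hf0 | hf0
  · rw [hf0]
    push_cast
    positivity
  have hnp : Nonempty P := Fintype.card_pos_iff.mp hv
  obtain ⟨p0⟩ := hnp
  have hrep : ∀ p : P, (ℬ.filter fun B => p ∈ B).card = k :=
    aux_rep ℬ k lam hk2 hbk hlam hsym hv
  have hlamv : lam * (v - 1) = k * (k - 1) := by
    have h1 := aux_point_count ℬ k lam hbk hlam p0
    rw [hrep p0] at h1
    exact h1.symm
  have hlamk : lam < k := by
    rcases Nat.lt_or_ge lam k with h | h
    · exact h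
    · exfalso
      have h1 : k * (k - 1) < k * (v - 1) := by
        have hlt : k - 1 < v - 1 := by omega
        exact mul_lt_mul_of_pos_left hlt (by omega)
      have h2 : k * (v - 1) ≤ lam * (v - 1) := Nat.mul_le_mul_right _ h
      omega
  have hdual := aux_dual ℬ k lam hk2 hlam1 hbk hlam hsym hv
  -- the image map is a bijection of ℬ
  have himg : ℬ.image (fun B => B.image ⇑g) = ℬ := by
    apply Finset.eq_of_subset_of_card_le
    · intro B hB
      obtain ⟨B', hB', rfl⟩ := Finset.mem_image.mp hB
      exact hgB B' hB'
    · rw [Finset.card_image_of_injective _ (Finset.image_injective g.injective)]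
  have hpre : ∀ B ∈ ℬ, B.image ⇑g⁻¹ ∈ ℬ := by
    intro B hB
    rw [← himg] at hB
    obtain ⟨B', hB', rfl⟩ := Finset.mem_image.mp hB
    have : (B'.image ⇑g).image ⇑g⁻¹ = B' := by
      rw [Finset.image_image]
      have : (⇑g⁻¹ ∘ ⇑g) = id := by
        funext x; simp
      rw [this, Finset.image_id]
    rw [this]; exact hB'
  have hfixiff : ∀ B : Finset P, (B.image ⇑g⁻¹ = B ↔ B.image ⇑g = B) := by
    intro B
    constructor
    · intro h
      conv_lhs => rw [← h]
      rw [Finset.image_image]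
      have : (⇑g ∘ ⇑g⁻¹) = id := by funext x; simp
      rw [this, Finset.image_id]
    · intro h
      conv_lhs => rw [← h]
      rw [Finset.image_image]
      have : (⇑g⁻¹ ∘ ⇑g) = id := by funext x; simp
      rw [this, Finset.image_id]
  set Fix := ℬ.filter (fun B => B.image ⇑g = B) with hFix
  set t := Fix.card with ht
  have hcardnotF : (Finset.univ.filter (fun p : P => ¬ g p = p)).card = v - f := by
    have hns : (Finset.univ.filter (fun p : P => ¬ g p = p)) = Finset.univ \ F := by
      rw [hF]; exact Finset.filter_not _ _
    rw [hns, Finset.card_sdiff_of_subset (Finset.subset_univ F), Finset.card_univ, ← hvdef, ← hf]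
  have hcardnotFix : (ℬ.filter (fun B => ¬ B.image ⇑g = B)).card = v - t := by
    have hns : (ℬ.filter (fun B => ¬ B.image ⇑g = B)) = ℬ \ Fix := by
      rw [hFix]; exact Finset.filter_not _ _
    rw [hns, Finset.card_sdiff_of_subset (Finset.filter_subset _ _), hsym, ← hFix, ← ht]
  -- double count of incident pairs (p, B) with p ∈ B and g p ∈ B
  have cP : ∑ p : P, (ℬ.filter fun B => p ∈ B ∧ g p ∈ B).card
      = f * k + (v - f) * lam := by
    rw [← Finset.sum_filter_add_sum_filter_not Finset.univ (fun p : P => g p = p)]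
    have e1 : ∀ p ∈ F, (ℬ.filter fun B => p ∈ B ∧ g p ∈ B).card = k := by
      intro p hp
      have hgp : g p = p := (Finset.mem_filter.mp hp).2
      have : (ℬ.filter fun B => p ∈ B ∧ g p ∈ B) = ℬ.filter fun B => p ∈ B := by
        apply Finset.filter_congr
        intro B _
        rw [hgp]
        simp
      rw [this, hrep p]
    have e2 : ∀ p ∈ Finset.univ.filter (fun p : P => ¬ g p = p),
        (ℬ.filter fun B => p ∈ B ∧ g p ∈ B).card = lam := by
      intro p hp
      have hgp : ¬ g p = p := (Finset.mem_filter.mp hp).2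
      exact hlam p (g p) (fun h => hgp (by rw [← h]))
    rw [Finset.sum_congr rfl e1, Finset.sum_congr rfl e2, Finset.sum_const,
      Finset.sum_const, smul_eq_mul, smul_eq_mul, hcardnotF]
  have cB : ∑ p : P, (ℬ.filter fun B => p ∈ B ∧ g p ∈ B).card
      = t * k + (v - t) * lam := by
    calc ∑ p : P, (ℬ.filter fun B => p ∈ B ∧ g p ∈ B).card
        = ∑ p : P, ∑ B ∈ ℬ, if p ∈ B ∧ g p ∈ B then 1 else 0 :=
          Finset.sum_congr rfl fun p _ => Finset.card_filter _ _
      _ = ∑ B ∈ ℬ, ∑ p : P, if p ∈ B ∧ g p ∈ B then 1 else 0 := Finset.sum_comm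
      _ = ∑ B ∈ ℬ, (B ∩ B.image ⇑g⁻¹).card := by
          refine Finset.sum_congr rfl fun B _ => ?_
          rw [← Finset.card_filter]
          congr 1
          ext p
          simp only [Finset.mem_filter, Finset.mem_univ, true_and, Finset.mem_inter,
            Finset.mem_image]
          constructor
          · rintro ⟨h1, h2⟩
            exact ⟨h1, g p, h2, by simp⟩
          · rintro ⟨h1, q, hq, rfl⟩
            refine ⟨h1, ?_⟩
            simpa using hq
      _ = t * k + (v - t) * lam := by
          rw [← Finset.sum_filter_add_sum_filter_not ℬ (fun B => B.image ⇑g = B)]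
          have e1 : ∀ B ∈ Fix, (B ∩ B.image ⇑g⁻¹).card = k := by
            intro B hB
            obtain ⟨hBm, hBf⟩ := Finset.mem_filter.mp hB
            rw [(hfixiff B).mpr hBf, Finset.inter_self]
            exact hbk B hBm
          have e2 : ∀ B ∈ ℬ.filter (fun B => ¬ B.image ⇑g = B),
              (B ∩ B.image ⇑g⁻¹).card = lam := by
            intro B hB
            obtain ⟨hBm, hBf⟩ := Finset.mem_filter.mp hB
            have hne : B ≠ B.image ⇑g⁻¹ := by
              intro h
              exact hBf ((hfixiff B).mp h.symm)
            exact hdual (B.image ⇑g⁻¹) (hpre B hBm) B hBm hne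
          rw [Finset.sum_congr rfl e1, Finset.sum_congr rfl e2, Finset.sum_const,
            Finset.sum_const, smul_eq_mul, smul_eq_mul, hcardnotFix]
  have htf : t = f := by
    have hfv : f ≤ v := by
      rw [hvdef, ← Finset.card_univ (α := P)]
      exact Finset.card_le_card (Finset.filter_subset _ _)
    have htv : t ≤ v := by
      rw [ht, hFix, ← hsym]
      exact Finset.card_le_card (Finset.filter_subset _ _)
    have hz : (t : ℤ) * k + ((v : ℤ) - t) * lam = (f : ℤ) * k + ((v : ℤ) - f) * lam := by
      have h := cP.symm.trans cB
      have := congrArg (Nat.cast : ℕ → ℤ) h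
      push_cast [Nat.cast_sub hfv, Nat.cast_sub htv] at this
      linarith
    have hzz : ((t : ℤ) - f) * ((k : ℤ) - lam) = 0 := by ring_nf; ring_nf at hz; linarith
    have hkl : ((k : ℤ) - lam) ≠ 0 := by
      have : (lam : ℤ) < k := by exact_mod_cast hlamk
      omega
    have := mul_eq_zero.mp hzz
    rcases this with h | h
    · have : (t : ℤ) = f := by linarith
      exact_mod_cast this
    · exact absurd h hkl
  -- indicator form of |B ∩ F|
  have hindF : ∀ B : Finset P, (B ∩ F).card = ∑ p ∈ F, if p ∈ B then 1 else 0 := by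
    intro B
    rw [← Finset.card_filter]
    congr 1
    ext q; simp [and_comm]
  -- first moment of d_B = |B ∩ F|
  have sumd : ∑ B ∈ ℬ, (B ∩ F).card = f * k := by
    calc ∑ B ∈ ℬ, (B ∩ F).card
        = ∑ B ∈ ℬ, ∑ p ∈ F, if p ∈ B then 1 else 0 :=
          Finset.sum_congr rfl fun B _ => hindF B
      _ = ∑ p ∈ F, ∑ B ∈ ℬ, if p ∈ B then 1 else 0 := Finset.sum_comm
      _ = ∑ p ∈ F, k := by
          refine Finset.sum_congr rfl fun p _ => ?_
          rw [← Finset.card_filter, hrep p]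
      _ = f * k := by rw [Finset.sum_const, smul_eq_mul]
  -- second moment
  have sumd2 : ∑ B ∈ ℬ, (B ∩ F).card ^ 2 = f * (k + (f - 1) * lam) := by
    have hsqF : ∀ B : Finset P, (B ∩ F).card ^ 2
        = ∑ p ∈ F, ∑ q ∈ F, if p ∈ B ∧ q ∈ B then 1 else 0 := by
      intro B
      rw [hindF B, sq, Finset.sum_mul_sum]
      refine Finset.sum_congr rfl fun p _ => Finset.sum_congr rfl fun q _ => ?_
      by_cases h1 : p ∈ B <;> by_cases h2 : q ∈ B <;> simp [h1, h2]
    calc ∑ B ∈ ℬ, (B ∩ F).card ^ 2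
        = ∑ B ∈ ℬ, ∑ p ∈ F, ∑ q ∈ F, if p ∈ B ∧ q ∈ B then 1 else 0 :=
          Finset.sum_congr rfl fun B _ => hsqF B
      _ = ∑ p ∈ F, ∑ B ∈ ℬ, ∑ q ∈ F, if p ∈ B ∧ q ∈ B then 1 else 0 := Finset.sum_comm
      _ = ∑ p ∈ F, ∑ q ∈ F, ∑ B ∈ ℬ, if p ∈ B ∧ q ∈ B then 1 else 0 :=
          Finset.sum_congr rfl fun p _ => Finset.sum_comm
      _ = ∑ p ∈ F, (k + (f - 1) * lam) := by
          refine Finset.sum_congr rfl fun p hp => ?_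
          have hsplit : F = insert p (F.erase p) := (Finset.insert_erase hp).symm
          rw [hsplit]
          rw [Finset.sum_insert (Finset.notMem_erase p F)]
          have hdiag : ∑ B ∈ ℬ, (if p ∈ B ∧ p ∈ B then 1 else 0) = k := by
            simp only [and_self]
            rw [← Finset.card_filter, hrep p]
          have hoff : ∀ q ∈ F.erase p, ∑ B ∈ ℬ, (if p ∈ B ∧ q ∈ B then 1 else 0)
              = lam := by
            intro q hq
            rw [← Finset.card_filter]
            exact hlam p q (Ne.symm (Finset.mem_erase.mp hq).1)
          rw [hdiag, Finset.sum_congr rfl hoff, Finset.sum_const, smul_eq_mul,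
            Finset.card_erase_of_mem hp, ← hf]
      _ = f * (k + (f - 1) * lam) := by rw [Finset.sum_const, smul_eq_mul, ← hf]
  -- a moved block contains at most lam fixed points
  have nonfix_le : ∀ B ∈ ℬ, B.image ⇑g ≠ B → (B ∩ F).card ≤ lam := by
    intro B hB hne
    have hsub : B ∩ F ⊆ (B.image ⇑g) ∩ B := by
      intro p hp
      obtain ⟨hp1, hp2⟩ := Finset.mem_inter.mp hp
      have hgp : g p = p := (Finset.mem_filter.mp hp2).2
      exact Finset.mem_inter.mpr ⟨Finset.mem_image.mpr ⟨p, hp1, hgp⟩, hp1⟩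
    calc (B ∩ F).card ≤ ((B.image ⇑g) ∩ B).card := Finset.card_le_card hsub
      _ = lam := hdual B hB (B.image ⇑g) (hgB B hB) hne
  -- split of the first moment
  have hsplitd : ∑ B ∈ Fix, (B ∩ F).card
      + ∑ B ∈ ℬ.filter (fun B => ¬ B.image ⇑g = B), (B ∩ F).card = f * k := by
    rw [hFix, Finset.sum_filter_add_sum_filter_not]
    exact sumd
  have hnonsum : ∑ B ∈ ℬ.filter (fun B => ¬ B.image ⇑g = B), (B ∩ F).card
      ≤ (v - f) * lam := by
    calc ∑ B ∈ ℬ.filter (fun B => ¬ B.image ⇑g = B), (B ∩ F).card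
        ≤ (ℬ.filter (fun B => ¬ B.image ⇑g = B)).card • lam := by
          apply Finset.sum_le_card_nsmul
          intro B hB
          exact nonfix_le B (Finset.mem_filter.mp hB).1 (Finset.mem_filter.mp hB).2
      _ = (v - f) * lam := by rw [hcardnotFix, htf, smul_eq_mul]
  -- f ≤ v - 1
  have fle : f ≤ v - 1 := by
    obtain ⟨x, hx⟩ : ∃ x : P, g x ≠ x := by
      by_contra h
      push_neg at h
      exact hg (Equiv.ext h)
    have hsub : F ⊆ Finset.univ.erase x := by
      intro p hp
      refine Finset.mem_erase.mpr ⟨?_, Finset.mem_univ p⟩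
      intro hpx
      exact hx (hpx ▸ (Finset.mem_filter.mp hp).2)
    have := Finset.card_le_card hsub
    rwa [Finset.card_erase_of_mem (Finset.mem_univ x), Finset.card_univ, ← hvdef,
      ← hf] at this
  ------------------------------------------------------------------
  -- real arithmetic
  ------------------------------------------------------------------
  have hk1 : 1 ≤ k := by omega
  have hkR : (2:ℝ) ≤ (k:ℝ) := by exact_mod_cast hk2
  have hlamR : (1:ℝ) ≤ (lam:ℝ) := by exact_mod_cast hlam1
  have hlamkR : (lam:ℝ) < (k:ℝ) := by exact_mod_cast hlamk
  have hkvR : (k:ℝ) < (v:ℝ) := by exact_mod_cast hkv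
  have hvR : (0:ℝ) < (v:ℝ) := by exact_mod_cast hv
  have hfvR : (f:ℝ) ≤ (v:ℝ) - 1 := by
    have h := fle
    have : (f:ℝ) ≤ ((v - 1 : ℕ) : ℝ) := by exact_mod_cast h
    rwa [Nat.cast_sub hv1, Nat.cast_one] at this
  have hf0R : (0:ℝ) < (f:ℝ) := by exact_mod_cast hf0
  have hf1R : (1:ℝ) ≤ (f:ℝ) := by exact_mod_cast hf0
  have hLV : (lam:ℝ) * v = (k:ℝ) * k - k + lam := by
    have h := congrArg (Nat.cast : ℕ → ℝ) hlamv
    push_cast [Nat.cast_sub hv1, Nat.cast_sub hk1] at h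
    linear_combination h
  have hs0 : 0 ≤ Real.sqrt ((k:ℝ) - lam) := Real.sqrt_nonneg _
  have hs2 : Real.sqrt ((k:ℝ) - lam) ^ 2 = (k:ℝ) - lam := Real.sq_sqrt (by linarith)
  have hkk : (k:ℝ) ≤ (k:ℝ) * k := by nlinarith [hkR]
  have hsk : Real.sqrt ((k:ℝ) - lam) < (k:ℝ) := by
    rw [Real.sqrt_lt' (by linarith : (0:ℝ) < (k:ℝ))]
    nlinarith [hkk, hlamR]
  -- trivial case: f*k ≤ v*lam forces f < k
  rcases le_or_gt ((f:ℝ) * k) ((v:ℝ) * lam) with hcase | hcase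
  · have h2 : (f:ℝ) * k ≤ (k:ℝ) * k := by linarith [hLV, hlamkR]
    have hfk : (f:ℝ) ≤ (k:ℝ) := le_of_mul_le_mul_right h2 (by linarith)
    linarith
  -- main case
  set μ : ℝ := (f:ℝ) * k / v with hμdef
  have hμlam : (lam:ℝ) < μ := by
    rw [hμdef, lt_div_iff₀ hvR]
    nlinarith
  -- total variance
  have SR1 : ∑ B ∈ ℬ, ((B ∩ F).card : ℝ) = (f:ℝ) * k := by
    have h := congrArg (Nat.cast : ℕ → ℝ) sumd
    push_cast at h
    exact h
  have SR2 : ∑ B ∈ ℬ, ((B ∩ F).card : ℝ) ^ 2 = (f:ℝ) * (k + ((f:ℝ) - 1) * lam) := by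
    have h := congrArg (Nat.cast : ℕ → ℝ) sumd2
    push_cast [Nat.cast_sub hf0] at h
    exact h
  have hcardR : ((ℬ.card : ℕ) : ℝ) = (v:ℝ) := by exact_mod_cast hsym
  have Stot : ∑ B ∈ ℬ, (((B ∩ F).card : ℝ) - μ) ^ 2
      = ((k:ℝ) - lam) * f * ((v:ℝ) - f) / v := by
    have expand : ∀ B ∈ ℬ, (((B ∩ F).card : ℝ) - μ) ^ 2
        = ((B ∩ F).card : ℝ) ^ 2 - 2 * μ * ((B ∩ F).card : ℝ) + μ ^ 2 := by
      intro B _; ring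
    rw [Finset.sum_congr rfl expand, Finset.sum_add_distrib, Finset.sum_sub_distrib,
      ← Finset.mul_sum, Finset.sum_const, SR1, SR2, nsmul_eq_mul, hcardR, hμdef]
    field_simp
    ring_nf
    linear_combination (f:ℝ) * hLV
  have hfv' : f ≤ v := by omega
  -- split the variance over fixed / moved blocks
  have hsplitvar : ∑ B ∈ Fix, (((B ∩ F).card : ℝ) - μ) ^ 2
      + ∑ B ∈ ℬ.filter (fun B => ¬ B.image ⇑g = B), (((B ∩ F).card : ℝ) - μ) ^ 2
      = ((k:ℝ) - lam) * f * ((v:ℝ) - f) / v := by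
    rw [hFix, Finset.sum_filter_add_sum_filter_not]
    exact Stot
  -- Cauchy–Schwarz on the fixed blocks
  have hCS : (∑ B ∈ Fix, (((B ∩ F).card : ℝ) - μ)) ^ 2
      ≤ (f:ℝ) * ∑ B ∈ Fix, (((B ∩ F).card : ℝ) - μ) ^ 2 := by
    have h := sq_sum_le_card_mul_sum_sq (s := Fix)
      (f := fun B => (((B ∩ F).card : ℝ) - μ))
    have hc : ((Fix.card : ℕ) : ℝ) = (f:ℝ) := by rw [← ht, htf]
    rwa [hc] at h
  -- lower bound for the centered sum over fixed blocks
  have hIfix : ((v:ℝ) - f) * (μ - lam) ≤ ∑ B ∈ Fix, (((B ∩ F).card : ℝ) - μ) := by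
    have h1 : (∑ B ∈ Fix, ((B ∩ F).card : ℝ))
        + ∑ B ∈ ℬ.filter (fun B => ¬ B.image ⇑g = B), ((B ∩ F).card : ℝ)
        = (f:ℝ) * k := by
      have := congrArg (Nat.cast : ℕ → ℝ) hsplitd
      push_cast at this
      exact this
    have h2 : ∑ B ∈ ℬ.filter (fun B => ¬ B.image ⇑g = B), ((B ∩ F).card : ℝ)
        ≤ ((v:ℝ) - f) * lam := by
      have h2' : ((∑ B ∈ ℬ.filter (fun B => ¬ B.image ⇑g = B), (B ∩ F).card : ℕ) : ℝ)
          ≤ (((v - f) * lam : ℕ) : ℝ) := Nat.cast_le.mpr hnonsum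
      push_cast [Nat.cast_sub hfv'] at h2'
      exact h2'
    have h3 : ∑ B ∈ Fix, (((B ∩ F).card : ℝ) - μ)
        = (∑ B ∈ Fix, ((B ∩ F).card : ℝ)) - (f:ℝ) * μ := by
      rw [Finset.sum_sub_distrib, Finset.sum_const, nsmul_eq_mul]
      have hc : ((Fix.card : ℕ) : ℝ) = (f:ℝ) := by rw [← ht, htf]
      rw [hc]
    have hident : (f:ℝ) * k - ((v:ℝ) - f) * lam - (f:ℝ) * μ
        = ((v:ℝ) - f) * (μ - lam) := by
      rw [hμdef]; field_simp; try ring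
    rw [h3]
    linarith
  have hμlam' : (0:ℝ) ≤ μ - lam := le_of_lt (sub_pos.mpr hμlam)
  have hvf1 : (1:ℝ) ≤ (v:ℝ) - f := by linarith
  have hfixlow : (((v:ℝ) - f) * (μ - lam)) ^ 2
      ≤ (f:ℝ) * ∑ B ∈ Fix, (((B ∩ F).card : ℝ) - μ) ^ 2 :=
    le_trans (pow_le_pow_left₀ (by positivity) hIfix 2) hCS
  -- lower bound for the moved blocks
  have hnonlow : ((v:ℝ) - f) * (μ - lam) ^ 2
      ≤ ∑ B ∈ ℬ.filter (fun B => ¬ B.image ⇑g = B), (((B ∩ F).card : ℝ) - μ) ^ 2 := by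
    have hcard' : (((ℬ.filter (fun B => ¬ B.image ⇑g = B)).card : ℕ) : ℝ)
        = (v:ℝ) - f := by
      rw [hcardnotFix, htf]
      push_cast [Nat.cast_sub hfv']
      ring
    have hb : ∀ B ∈ ℬ.filter (fun B => ¬ B.image ⇑g = B),
        (μ - lam) ^ 2 ≤ (((B ∩ F).card : ℝ) - μ) ^ 2 := by
      intro B hB
      obtain ⟨hBm, hBn⟩ := Finset.mem_filter.mp hB
      have hd : ((B ∩ F).card : ℝ) ≤ (lam : ℝ) := by
        exact_mod_cast nonfix_le B hBm hBn
      have h1 : (μ - lam) ^ 2 ≤ (μ - ((B ∩ F).card : ℝ)) ^ 2 :=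
        pow_le_pow_left₀ hμlam' (by linarith) 2
      calc (μ - lam) ^ 2 ≤ (μ - ((B ∩ F).card : ℝ)) ^ 2 := h1
        _ = (((B ∩ F).card : ℝ) - μ) ^ 2 := by ring
    have := Finset.card_nsmul_le_sum (ℬ.filter (fun B => ¬ B.image ⇑g = B))
      (fun B => (((B ∩ F).card : ℝ) - μ) ^ 2) ((μ - lam) ^ 2) hb
    rwa [nsmul_eq_mul, hcard'] at this
  -- combine everything
  have hXbound : (μ - lam) ^ 2 ≤ ((k:ℝ) - lam) * (f:ℝ) ^ 2 / (v:ℝ) ^ 2 := by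
    have h2 : (f:ℝ) * (((v:ℝ) - f) * (μ - lam) ^ 2)
        ≤ (f:ℝ) * ∑ B ∈ ℬ.filter (fun B => ¬ B.image ⇑g = B),
            (((B ∩ F).card : ℝ) - μ) ^ 2 :=
      mul_le_mul_of_nonneg_left hnonlow (le_of_lt hf0R)
    have h3 : (f:ℝ) * (∑ B ∈ Fix, (((B ∩ F).card : ℝ) - μ) ^ 2)
        + (f:ℝ) * (∑ B ∈ ℬ.filter (fun B => ¬ B.image ⇑g = B),
            (((B ∩ F).card : ℝ) - μ) ^ 2)
        = (f:ℝ) * (((k:ℝ) - lam) * f * ((v:ℝ) - f) / v) := by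
      rw [← mul_add, hsplitvar]
    have hcomb : ((v:ℝ) - f) * ((v:ℝ) * (μ - lam) ^ 2)
        ≤ ((v:ℝ) - f) * (((k:ℝ) - lam) * (f:ℝ) ^ 2 / v) := by
      have hfac : ((v:ℝ) - f) * ((v:ℝ) * (μ - lam) ^ 2)
          = (((v:ℝ) - f) * (μ - lam)) ^ 2 + (f:ℝ) * (((v:ℝ) - f) * (μ - lam) ^ 2) := by
        ring
      have hrhs : (f:ℝ) * (((k:ℝ) - lam) * f * ((v:ℝ) - f) / v)
          = ((v:ℝ) - f) * (((k:ℝ) - lam) * (f:ℝ) ^ 2 / v) := by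
        field_simp
      rw [hfac, ← hrhs]
      linarith
    have h4 : (v:ℝ) * (μ - lam) ^ 2 ≤ ((k:ℝ) - lam) * (f:ℝ) ^ 2 / v :=
      le_of_mul_le_mul_left hcomb (by linarith)
    have h6' : (μ - lam) ^ 2 * v ≤ (((k:ℝ) - lam) * (f:ℝ) ^ 2 / (v:ℝ) ^ 2) * v := by
      calc (μ - lam) ^ 2 * v = (v:ℝ) * (μ - lam) ^ 2 := by ring
        _ ≤ ((k:ℝ) - lam) * (f:ℝ) ^ 2 / v := h4
        _ = (((k:ℝ) - lam) * (f:ℝ) ^ 2 / (v:ℝ) ^ 2) * v := by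
            field_simp
    exact le_of_mul_le_mul_right h6' hvR
  -- take square roots
  have hμle : μ - lam ≤ Real.sqrt ((k:ℝ) - lam) * f / v := by
    have hb0 : (0:ℝ) ≤ Real.sqrt ((k:ℝ) - lam) * f / v := by positivity
    have hXb : (μ - lam) ^ 2 ≤ (Real.sqrt ((k:ℝ) - lam) * f / v) ^ 2 := by
      rw [div_pow, mul_pow, hs2]
      exact hXbound
    calc μ - lam = Real.sqrt ((μ - lam) ^ 2) := (Real.sqrt_sq hμlam').symm
      _ ≤ Real.sqrt ((Real.sqrt ((k:ℝ) - lam) * f / v) ^ 2) := Real.sqrt_le_sqrt hXb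
      _ = Real.sqrt ((k:ℝ) - lam) * f / v := Real.sqrt_sq hb0
  -- clear denominators
  have hfin : (f:ℝ) * k - (v:ℝ) * lam ≤ Real.sqrt ((k:ℝ) - lam) * f := by
    have hmul := mul_le_mul_of_nonneg_right hμle (le_of_lt hvR)
    have e1 : (μ - lam) * v = (f:ℝ) * k - (v:ℝ) * lam := by
      rw [hμdef]; field_simp; try ring
    have e2 : (Real.sqrt ((k:ℝ) - lam) * f / v) * v = Real.sqrt ((k:ℝ) - lam) * f := by
      field_simp
    rw [e1, e2] at hmul
    exact hmul
  have hVL : (v:ℝ) * lam = (k:ℝ) * k - ((k:ℝ) - lam) := by linarith [hLV]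
  have hks : (0:ℝ) < (k:ℝ) - Real.sqrt ((k:ℝ) - lam) := by linarith [hsk]
  have h6 : (f:ℝ) * ((k:ℝ) - Real.sqrt ((k:ℝ) - lam))
      ≤ ((k:ℝ) + Real.sqrt ((k:ℝ) - lam)) * ((k:ℝ) - Real.sqrt ((k:ℝ) - lam)) := by
    nlinarith [hfin, hVL, hs2]
  exact le_of_mul_le_mul_right h6 hks


/-- Let `Δ` be a finite set of size `v₀ ≥ 2`, let `m ≥ 1`, and let `𝒟` be a symmetric
2-`(v₀^m, k, λ)` design whose point set is the Cartesian power `Δ^m`.  If `g` is a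
non-identity automorphism of `𝒟` fixing pointwise every `m`-tuple whose first
coordinate is `α` and every `m`-tuple whose first coordinate is `γ`, for distinct
`α, γ ∈ Δ`, then `2·v₀^(m-1) ≤ k + √(k-λ)`, and consequently `2·v₀^(m-1) < k + √k`. -/
theorem stmt_16 {Δ : Type*} [Fintype Δ] [DecidableEq Δ]
    (v₀ m k lam : ℕ) (hv₀ : Fintype.card Δ = v₀) (h2v₀ : 2 ≤ v₀) (hm : 1 ≤ m)
    (ℬ : Finset (Finset (Fin m → Δ)))
    -- `𝒟` is a 2-(v₀^m, k, λ) design on the point set `P = Δ^m`: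
    (hk2 : 2 ≤ k) (hkv : k < v₀ ^ m)
    (hbk : ∀ B ∈ ℬ, B.card = k)
    (hlam : ∀ x y : Fin m → Δ, x ≠ y →
      (ℬ.filter fun B => x ∈ B ∧ y ∈ B).card = lam)
    -- `𝒟` is symmetric:
    (hsym : ℬ.card = v₀ ^ m)
    -- `g` is a non-identity automorphism of `𝒟`:
    (g : Equiv.Perm (Fin m → Δ)) (hg : g ≠ 1)
    (hgB : ∀ B ∈ ℬ, B.image ⇑g ∈ ℬ)
    -- `g` fixes every tuple with first coordinate `α` and every tuple with first
    -- coordinate `γ`, where `α ≠ γ`: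
    (α γ : Δ) (hαγ : α ≠ γ)
    (hfixα : ∀ x : Fin m → Δ, x ⟨0, hm⟩ = α → g x = x)
    (hfixγ : ∀ x : Fin m → Δ, x ⟨0, hm⟩ = γ → g x = x) :
    2 * (v₀ : ℝ) ^ (m - 1) ≤ k + Real.sqrt ((k : ℝ) - lam) ∧
      2 * (v₀ : ℝ) ^ (m - 1) < k + Real.sqrt k := by
  classical
  have hcardP : Fintype.card (Fin m → Δ) = v₀ ^ m := by
    rw [Fintype.card_fun, Fintype.card_fin, hv₀]
  have hkv' : k < Fintype.card (Fin m → Δ) := by rw [hcardP]; exact hkv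
  have hsym' : ℬ.card = Fintype.card (Fin m → Δ) := by rw [hcardP]; exact hsym
  -- λ ≥ 1
  have hlam1 : 1 ≤ lam := by
    have hBne : ℬ.Nonempty := by
      rw [← Finset.card_pos, hsym]
      exact Nat.pow_pos (by omega)
    obtain ⟨B, hB⟩ := hBne
    have h2 : 1 < B.card := by rw [hbk B hB]; omega
    obtain ⟨p, hp, q, hq, hpq⟩ := Finset.one_lt_card.mp h2
    have := hlam p q hpq
    have hmem : B ∈ ℬ.filter fun B => p ∈ B ∧ q ∈ B :=
      Finset.mem_filter.mpr ⟨hB, hp, hq⟩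
    have hpos : 0 < (ℬ.filter fun B => p ∈ B ∧ q ∈ B).card :=
      Finset.card_pos.mpr ⟨B, hmem⟩
    omega
  have hlamk : lam < k := aux_lamk ℬ k lam hk2 hkv' hbk hlam hsym'
  -- fixed points contain the two hyperplanes
  set i0 : Fin m := ⟨0, hm⟩ with hi0
  set F := Finset.univ.filter (fun p : Fin m → Δ => g p = p) with hF
  set Hα := Finset.univ.filter (fun x : Fin m → Δ => x i0 = α) with hHα
  set Hγ := Finset.univ.filter (fun x : Fin m → Δ => x i0 = γ) with hHγ
  have hsub : Hα ∪ Hγ ⊆ F := by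
    intro x hx
    rcases Finset.mem_union.mp hx with hx | hx
    · exact Finset.mem_filter.mpr ⟨Finset.mem_univ x,
        hfixα x (Finset.mem_filter.mp hx).2⟩
    · exact Finset.mem_filter.mpr ⟨Finset.mem_univ x,
        hfixγ x (Finset.mem_filter.mp hx).2⟩
  have hdisj : Disjoint Hα Hγ := by
    rw [Finset.disjoint_left]
    intro x hx hx'
    exact hαγ (((Finset.mem_filter.mp hx).2).symm.trans (Finset.mem_filter.mp hx').2)
  have hHcard : Hα.card = v₀ ^ (m - 1) := by
    rw [hHα, aux_hyper i0 α, hv₀]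
  have hHcard' : Hγ.card = v₀ ^ (m - 1) := by
    rw [hHγ, aux_hyper i0 γ, hv₀]
  have hflow : 2 * v₀ ^ (m - 1) ≤ F.card := by
    have := Finset.card_le_card hsub
    rw [Finset.card_union_of_disjoint hdisj, hHcard, hHcard'] at this
    omega
  have hbound := aux_fix_bound ℬ k lam hk2 hlam1 hkv' hbk hlam hsym' g hg hgB
  have hflowR : 2 * (v₀ : ℝ) ^ (m - 1) ≤ (F.card : ℝ) := by
    have : ((2 * v₀ ^ (m - 1) : ℕ) : ℝ) ≤ ((F.card : ℕ) : ℝ) := Nat.cast_le.mpr hflow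
    push_cast at this
    exact this
  have hmain : 2 * (v₀ : ℝ) ^ (m - 1) ≤ k + Real.sqrt ((k : ℝ) - lam) :=
    le_trans hflowR (by rw [hF] at *; exact hbound)
  refine ⟨hmain, lt_of_le_of_lt hmain ?_⟩
  have hsq : Real.sqrt ((k : ℝ) - lam) < Real.sqrt k := by
    apply Real.sqrt_lt_sqrt
    · have : (lam : ℝ) < k := by exact_mod_cast hlamk
      linarith
    · have : (1 : ℝ) ≤ (lam : ℝ) := by exact_mod_cast hlam1
      linarith
  linarith
end
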